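/- arXiv:1803.10575 — 5 statements merged into one kernel-verified Lean document; each statement's English description precedes it below -/
import Mathlib

section
/- Let r ≥ 2 be an integer and let H be a strictly balanced r-uniform hypergraph on vertex set [t] with density c = e(H)/t. Let n be a multiple of t, partition [n] into t classes W_1, ..., W_t each of size n/t, and for each edge e of H let E_e be a perfect matching of r-sets compatible with the partition and contained in ∪_{x∈e} W_x (i.e., each member of E_e meets each of the r classes {W_x : x ∈ e} in exactly one vertex, and the members of E_e are pairwise disjoint and cover all of ∪_{x∈e} W_x, so that each vertex of each such class lies in exactly one member of E_e). Then the r-uniform hypergraph G on [n] with edge set ∪_{e∈E(H)} E_e satisfies: for every subset X ⊆ [n], the number of edges of G contained in X is at most c·|X|. -/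
/-- blowing up a strictly balanced `r`-uniform hypergraph `H` of density `c`
along a balanced partition of `[n]`, using a perfect compatible matching for each edge of
`H`, yields a hypergraph `G` on `[n]` in which every vertex subset `X` spans at most
`c·|X|` edges. -/
theorem stmt3 (r t n q : ℕ) (hr : 2 ≤ r) (ht : 0 < t) (hn : n = t * q)
    (EH : Finset (Finset (Fin t))) (hunif : ∀ e ∈ EH, e.card = r)
    (c : ℝ) (hc : c = (EH.card : ℝ) / t)
    (hbal : ∀ V' : Finset (Fin t), V'.Nonempty → V' ⊂ Finset.univ →
      (((EH.filter (· ⊆ V')).card : ℝ)) / V'.card < c)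
    (W : Fin t → Finset (Fin n))
    (hWdisj : Pairwise (Function.onFun Disjoint W))
    (hWcard : ∀ x, (W x).card = q)
    (hWcover : Finset.univ.biUnion W = (Finset.univ : Finset (Fin n)))
    (Em : Finset (Fin t) → Finset (Finset (Fin n)))
    (hEm : ∀ e ∈ EH,
      (∀ f ∈ Em e, f.card = r ∧ ∀ x ∈ e, (f ∩ W x).card = 1) ∧
      ((Em e : Set (Finset (Fin n))).PairwiseDisjoint id) ∧
      (Em e).biUnion id = e.biUnion W) :
    ∀ X : Finset (Fin n),
      (((EH.biUnion Em).filter (· ⊆ X)).card : ℝ) ≤ c * X.card := by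
  intro X
  classical
  set a : Fin t → ℕ := fun x => (X ∩ W x).card with ha
  have haq : ∀ x, a x ≤ q := fun x => by
    calc a x ≤ (W x).card := Finset.card_le_card Finset.inter_subset_right
    _ = q := hWcard x
  set V : ℕ → Finset (Fin t) := fun s => Finset.univ.filter (fun x => s ≤ a x) with hV
  have hc0 : 0 ≤ c := by rw [hc]; positivity
  -- |X| = ∑ a x
  have hX : X.card = ∑ x, a x := by
    have hXeq : X = Finset.univ.biUnion (fun x => X ∩ W x) := by
      ext v
      simp only [Finset.mem_biUnion, Finset.mem_inter, Finset.mem_univ, true_and]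
      constructor
      · intro hv
        have hv' : v ∈ Finset.univ.biUnion W := by rw [hWcover]; simp
        obtain ⟨x, _, hx⟩ := Finset.mem_biUnion.mp hv'
        exact ⟨x, hv, hx⟩
      · rintro ⟨x, hv, _⟩; exact hv
    rw [hXeq]
    apply Finset.card_biUnion
    intro x _ y _ hxy
    exact (hWdisj hxy).mono Finset.inter_subset_right Finset.inter_subset_right
  -- key counting bound
  have hcnt : ∀ e ∈ EH, ∀ x ∈ e, ((Em e).filter (· ⊆ X)).card ≤ a x := by
    intro e he x hx
    obtain ⟨h1, h2, _⟩ := hEm e he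
    have hdisj : ∀ f ∈ (Em e).filter (· ⊆ X), ∀ g ∈ (Em e).filter (· ⊆ X), f ≠ g →
        Disjoint (f ∩ W x) (g ∩ W x) := by
      intro f hf g hg hfg
      exact (h2 (Finset.mem_coe.mpr (Finset.mem_filter.mp hf).1)
        (Finset.mem_coe.mpr (Finset.mem_filter.mp hg).1) hfg).mono
        Finset.inter_subset_left Finset.inter_subset_left
    have hcard : (((Em e).filter (· ⊆ X)).biUnion (fun f => f ∩ W x)).card
        = ((Em e).filter (· ⊆ X)).card := by
      rw [Finset.card_biUnion hdisj,
        Finset.sum_congr rfl (fun f hf => (h1 f (Finset.mem_filter.mp hf).1).2 x hx)]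
      simp
    rw [ha, ← hcard]
    apply Finset.card_le_card
    intro v hv
    obtain ⟨f, hf, hv⟩ := Finset.mem_biUnion.mp hv
    obtain ⟨hfE, hfX⟩ := Finset.mem_filter.mp hf
    exact Finset.mem_inter.mpr ⟨hfX (Finset.mem_inter.mp hv).1, (Finset.mem_inter.mp hv).2⟩
  -- per-edge level-set bound
  have hsum1 : ∀ e ∈ EH, ((Em e).filter (· ⊆ X)).card
      ≤ ∑ s ∈ Finset.Icc 1 q, (if e ⊆ V s then 1 else 0) := by
    intro e he
    have hne : e.Nonempty := Finset.card_pos.mp (by rw [hunif e he]; omega)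
    obtain ⟨x0, hx0⟩ := hne
    have hmq : ((Em e).filter (· ⊆ X)).card ≤ q := (hcnt e he x0 hx0).trans (haq x0)
    have hsub : ∀ s ∈ Finset.Icc 1 ((Em e).filter (· ⊆ X)).card, e ⊆ V s := by
      intro s hs y hy
      simp only [hV, Finset.mem_filter, Finset.mem_univ, true_and]
      have h1 := hcnt e he y hy
      have h2 := (Finset.mem_Icc.mp hs).2
      omega
    calc ((Em e).filter (· ⊆ X)).card
        = ∑ s ∈ Finset.Icc 1 (((Em e).filter (· ⊆ X)).card), (if e ⊆ V s then 1 else 0) := by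
          rw [Finset.sum_congr rfl (fun s hs => if_pos (hsub s hs))]
          simp [Nat.card_Icc]
      _ ≤ ∑ s ∈ Finset.Icc 1 q, (if e ⊆ V s then 1 else 0) :=
          Finset.sum_le_sum_of_subset (Finset.Icc_subset_Icc_right hmq)
  -- main natural-number inequality
  have hmain : ((EH.biUnion Em).filter (· ⊆ X)).card
      ≤ ∑ s ∈ Finset.Icc 1 q, (EH.filter (· ⊆ V s)).card := by
    calc ((EH.biUnion Em).filter (· ⊆ X)).card
        = (EH.biUnion (fun e => (Em e).filter (· ⊆ X))).card := by
          rw [Finset.filter_biUnion]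
      _ ≤ ∑ e ∈ EH, ((Em e).filter (· ⊆ X)).card := Finset.card_biUnion_le
      _ ≤ ∑ e ∈ EH, ∑ s ∈ Finset.Icc 1 q, (if e ⊆ V s then 1 else 0) :=
          Finset.sum_le_sum hsum1
      _ = ∑ s ∈ Finset.Icc 1 q, ∑ e ∈ EH, (if e ⊆ V s then 1 else 0) := Finset.sum_comm
      _ = ∑ s ∈ Finset.Icc 1 q, (EH.filter (· ⊆ V s)).card :=
          Finset.sum_congr rfl fun s _ => (Finset.card_filter _ _).symm
  -- total level-set size
  have hsum2 : ∑ s ∈ Finset.Icc 1 q, (V s).card = X.card := by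
    rw [hX]
    have hVs : ∀ s, (V s).card = ∑ x : Fin t, (if s ≤ a x then 1 else 0) := by
      intro s; rw [hV, Finset.card_filter]
    rw [Finset.sum_congr rfl (fun s _ => hVs s), Finset.sum_comm]
    apply Finset.sum_congr rfl
    intro x _
    rw [← Finset.card_filter]
    have : (Finset.Icc 1 q).filter (fun s => s ≤ a x) = Finset.Icc 1 (a x) := by
      ext s
      simp only [Finset.mem_filter, Finset.mem_Icc]
      have := haq x
      omega
    rw [this, Nat.card_Icc]
    omega
  -- per-level real bound
  have hstep : ∀ s, ((EH.filter (· ⊆ V s)).card : ℝ) ≤ c * (V s).card := by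
    intro s
    rcases eq_or_ne (V s) Finset.univ with h | h
    · rw [h]
      have heq : EH.filter (· ⊆ (Finset.univ : Finset (Fin t))) = EH :=
        Finset.filter_true_of_mem (fun e _ => Finset.subset_univ e)
      rw [heq, Finset.card_univ, Fintype.card_fin, hc, div_mul_cancel₀]
      exact_mod_cast ht.ne'
    · rcases Finset.eq_empty_or_nonempty (V s) with h0 | h0
      · rw [h0]
        have heq : EH.filter (· ⊆ (∅ : Finset (Fin t))) = ∅ := by
          rw [Finset.filter_eq_empty_iff]
          intro e he hsub
          have h1 := hunif e he
          have h2 : e = ∅ := Finset.subset_empty.mp hsub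
          rw [h2] at h1
          simp at h1
          omega
        rw [heq]
        simp
      · have hlt := hbal (V s) h0 ((Finset.subset_univ _).ssubset_of_ne h)
        have hpos : (0 : ℝ) < (V s).card := by exact_mod_cast Finset.card_pos.mpr h0
        rw [div_lt_iff₀ hpos] at hlt
        linarith
  -- combine
  calc (((EH.biUnion Em).filter (· ⊆ X)).card : ℝ)
      ≤ ((∑ s ∈ Finset.Icc 1 q, (EH.filter (· ⊆ V s)).card : ℕ) : ℝ) := by
        exact_mod_cast hmain
    _ = ∑ s ∈ Finset.Icc 1 q, ((EH.filter (· ⊆ V s)).card : ℝ) := by push_cast; ring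
    _ ≤ ∑ s ∈ Finset.Icc 1 q, c * ((V s).card : ℝ) :=
        Finset.sum_le_sum fun s _ => hstep s
    _ = c * ∑ s ∈ Finset.Icc 1 q, ((V s).card : ℝ) := by rw [Finset.mul_sum]
    _ = c * X.card := by rw [← Nat.cast_sum, hsum2]
end

section
/- Let r ≥ 2 be an integer, c ≥ 1/(r−1) a rational number, and let Q^c_n ∩ S^c_n denote the set of r-uniform hypergraphs G on vertex set [n] such that every subhypergraph H ⊆ G satisfies e(H) ≤ c·v(H). Then |Q^c_n ∩ S^c_n| ≥ n^{(r-1)cn − o(n)}; in particular, for any fixed strictly balanced r-uniform hypergraph H on [t] with density c, the number of such G is at least (⌊n/t⌋!)^{(r-1)ct}. -/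
/-!
Blow up `H`: replace each vertex `v` by a class `{v} × [m]`, `m = ⌊n/t⌋`, and each edge `f` by
the `m` disjoint edges `{(v, σ_v j) | v ∈ f}`, `j ∈ [m]`, for permutations `σ_v` of `[m]`. If `X`
meets the class of `v` in `x_v` points, at most `min_{v ∈ f} x_v` copies of `f` lie in `X`;
summing over the layers `{v | k < x_v}`, each of which spans at most `c` times its size edges
of `H`, bounds the edges inside `X` by `c·|X|`. Normalising one permutation per edge to the
identity, the other `(r-1)·e(H) = (r-1)ct` permutations are determined by the blow-up, which
gives `(m!)^{(r-1)ct}` members of `Qᶜ ∩ Sᶜ`; by Stirling this is `n^{(r-1)cn - o(n)}`.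
-/

open Filter

/-- An edge set `E` on `[n]` is in `Q^c ∩ S^c` if it is `r`-uniform and every induced
subhypergraph `H` (on a vertex set `X`) satisfies `e(H) ≤ c·v(H)`. -/
def QS (r : ℕ) (c : ℝ) (n : ℕ) (E : Finset (Finset (Fin n))) : Prop :=
  (∀ f ∈ E, f.card = r) ∧
    ∀ X : Finset (Fin n), ((E.filter (· ⊆ X)).card : ℝ) ≤ c * X.card

open Finset Equiv Real
open scoped Nat

theorem sum_range_ite_lt {a K : ℕ} (h : a ≤ K) :
    ∑ k ∈ range K, (if k < a then 1 else 0) = a := by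
  rw [sum_boole, Nat.cast_id, (by ext; simp; omega : (range K).filter (· < a) = range a),
    card_range]

theorem sum_eq_sum_range_card_filter_lt {ι : Type*} (s : Finset ι) (a : ι → ℕ) {K : ℕ}
    (hK : ∀ i ∈ s, a i ≤ K) : ∑ i ∈ s, a i = ∑ k ∈ range K, #(s.filter (k < a ·)) := by
  simp_rw [card_filter]
  rw [sum_comm]
  exact sum_congr rfl fun i hi => (sum_range_ite_lt (hK i hi)).symm

section Density

variable {α : Type*} [DecidableEq α]

def InducedDensityLe (c : ℝ) (E : Finset (Finset α)) : Prop :=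
  ∀ X : Finset α, (#(E.filter (· ⊆ X)) : ℝ) ≤ c * #X

/-- Layer-cake bound: cutting the weights `x` at each level `k` into the vertex set
`{v | k < x v}`, the edges inside that set are counted by the density hypothesis. -/
theorem InducedDensityLe.sum_le [Fintype α] {c : ℝ} {E : Finset (Finset α)}
    (hE : InducedDensityLe c E) (y : E → ℕ) (x : α → ℕ) (hyx : ∀ f : E, ∀ v ∈ f.1, y f ≤ x v) :
    ∑ f, (y f : ℝ) ≤ c * ∑ v, (x v : ℝ) := by
  set K := ∑ f, y f + ∑ v, x v
  have hyK : ∀ f ∈ univ, y f ≤ K := fun f _ =>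
    (single_le_sum (fun _ _ => Nat.zero_le _) (mem_univ f)).trans (Nat.le_add_right _ _)
  have hxK : ∀ v ∈ univ, x v ≤ K := fun v _ =>
    (single_le_sum (fun _ _ => Nat.zero_le _) (mem_univ v)).trans (Nat.le_add_left _ _)
  have hlayer : ∀ k, #(univ.filter (k < y ·)) ≤ #(E.filter (· ⊆ univ.filter (k < x ·))) :=
    fun k => card_le_card_of_injOn Subtype.val
      (fun f hf => by
        simp only [coe_filter, mem_univ, true_and, Set.mem_ofPred_eq] at hf ⊢
        exact ⟨f.2, fun v hv => by simpa using hf.trans_le (hyx f v hv)⟩)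
      Subtype.val_injective.injOn
  calc ∑ f, (y f : ℝ) = ∑ k ∈ range K, (#(univ.filter (k < y ·)) : ℝ) := by
        exact_mod_cast sum_eq_sum_range_card_filter_lt univ y hyK
    _ ≤ ∑ k ∈ range K, (#(E.filter (· ⊆ univ.filter (k < x ·))) : ℝ) :=
        sum_le_sum fun k _ => by exact_mod_cast hlayer k
    _ ≤ ∑ k ∈ range K, c * #(univ.filter (k < x ·)) := sum_le_sum fun k _ => hE _
    _ = c * ∑ v, (x v : ℝ) := by
        rw [← mul_sum]
        congr 1
        exact_mod_cast (sum_eq_sum_range_card_filter_lt univ x hxK).symm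

theorem InducedDensityLe.map {γ : Type*} [DecidableEq γ] [Fintype α] {c : ℝ} (hc : 0 ≤ c)
    {E : Finset (Finset α)} (hE : InducedDensityLe c E) (g : α ↪ γ) :
    InducedDensityLe c (E.map (mapEmbedding g).toEmbedding) := by
  intro X
  have hpre : #(univ.filter (g · ∈ X)) ≤ #X :=
    card_le_card_of_injOn g (fun a ha => by simpa using ha) g.injective.injOn
  have hfilter : (E.map (mapEmbedding g).toEmbedding).filter (· ⊆ X)
      = (E.filter (· ⊆ univ.filter (g · ∈ X))).map (mapEmbedding g).toEmbedding := by
    rw [filter_map]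
    congr 2
    ext f
    simp [subset_iff]
  rw [hfilter, card_map]
  exact (hE _).trans (mul_le_mul_of_nonneg_left (by exact_mod_cast hpre) hc)

end Density

section Blowup

variable {α β : Type*} [DecidableEq α] [DecidableEq β]

def blowupEdge (s : Finset α) (τ : α → Perm β) (j : β) : Finset (α × β) :=
  s.image fun v => (v, τ v j)

theorem mem_blowupEdge {s : Finset α} {τ : α → Perm β} {j : β} {p : α × β} :
    p ∈ blowupEdge s τ j ↔ p.1 ∈ s ∧ τ p.1 j = p.2 := by
  constructor
  · simp only [blowupEdge, mem_image]
    rintro ⟨v, hv, rfl⟩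
    exact ⟨hv, rfl⟩
  · rintro ⟨hp, hτ⟩
    exact mem_image.2 ⟨p.1, hp, by rw [hτ]⟩

theorem card_blowupEdge (s : Finset α) (τ : α → Perm β) (j : β) :
    #(blowupEdge s τ j) = #s :=
  card_image_of_injective _ fun _ _ h => (Prod.ext_iff.1 h).1

theorem image_fst_blowupEdge (s : Finset α) (τ : α → Perm β) (j : β) :
    (blowupEdge s τ j).image Prod.fst = s := by
  simp [blowupEdge, image_image, Function.comp_def]

variable [Fintype β] {E : Finset (Finset α)}

def blowup (σ : E → α → Perm β) : Finset (Finset (α × β)) :=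
  univ.image fun p : E × β => blowupEdge p.1.1 (σ p.1) p.2

theorem card_of_mem_blowup {r : ℕ} (hunif : ∀ f ∈ E, #f = r) (σ : E → α → Perm β)
    {e : Finset (α × β)} (he : e ∈ blowup σ) : #e = r := by
  obtain ⟨⟨f, j⟩, -, rfl⟩ := mem_image.1 he
  rw [card_blowupEdge, hunif f.1 f.2]

/-- A copy of `f` inside `X` uses a distinct point of `X` in every class `{v} × β`, `v ∈ f`. -/
theorem inducedDensityLe_blowup [Fintype α] {c : ℝ} (hE : InducedDensityLe c E)
    (σ : E → α → Perm β) : InducedDensityLe c (blowup σ) := by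
  intro X
  set y : E → ℕ := fun f => #(univ.filter fun j => blowupEdge f.1 (σ f) j ⊆ X)
  set x : α → ℕ := fun v => #(X.filter (·.1 = v))
  have hfilter : #((blowup σ).filter (· ⊆ X)) ≤ ∑ f, y f :=
    calc #((blowup σ).filter (· ⊆ X))
        ≤ #(univ.filter fun p : E × β => blowupEdge p.1.1 (σ p.1) p.2 ⊆ X) := by
          rw [blowup, filter_image]
          exact card_image_le
      _ = ∑ f, y f := by
          simp only [y, card_filter, Fintype.sum_prod_type]
  have hyx : ∀ f : E, ∀ v ∈ f.1, y f ≤ x v := fun f v hv =>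
    card_le_card_of_injOn (fun j => (v, σ f v j))
      (fun j hj => by
        simp only [coe_filter, mem_univ, true_and, Set.mem_ofPred_eq] at hj ⊢
        exact ⟨hj (mem_blowupEdge.2 ⟨hv, rfl⟩), trivial⟩)
      (fun _ _ _ _ h => (σ f v).injective (Prod.ext_iff.1 h).2)
  have hx : ∑ v, x v = #X := (card_eq_sum_card_fiberwise fun p _ => mem_univ p.1).symm
  calc (#((blowup σ).filter (· ⊆ X)) : ℝ) ≤ ∑ f, (y f : ℝ) := by exact_mod_cast hfilter
    _ ≤ c * ∑ v, (x v : ℝ) := hE.sum_le y x hyx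
    _ = c * #X := by rw [← hx, Nat.cast_sum]

/-- A point in the class of `u ∈ f` determines the copy of `f` containing it. -/
theorem eq_of_blowup_eq {σ σ' : E → α → Perm β} (h : blowup σ = blowup σ') {f : E}
    {u v : α} (hu : u ∈ f.1) (hv : v ∈ f.1) (hσu : σ f u = σ' f u) : σ f v = σ' f v := by
  ext j
  have hmem : blowupEdge f.1 (σ f) j ∈ blowup σ' := h ▸ mem_image_of_mem _ (mem_univ (f, j))
  obtain ⟨⟨f', j'⟩, -, hedge⟩ := mem_image.1 hmem
  obtain rfl : f' = f := Subtype.ext <| by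
    simpa only [image_fst_blowupEdge] using congrArg (image Prod.fst) hedge
  have key : ∀ w ∈ f'.1, σ' f' w j' = σ f' w j := fun w hw =>
    (mem_blowupEdge.1 (hedge ▸ mem_blowupEdge.2 ⟨hw, rfl⟩ :
      (w, σ f' w j) ∈ blowupEdge f'.1 (σ' f') j')).2
  have hj : j' = j := (σ' f' u).injective (by rw [key u hu, hσu])
  rw [← key v hv, hj]

def rootedPerms (root : E → α) (a : (f : E) → ↥(f.1.erase (root f)) → Perm β) :
    E → α → Perm β :=
  fun f v => if h : v ∈ f.1.erase (root f) then a f ⟨v, h⟩ else 1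

theorem blowup_rootedPerms_injective (root : E → α) (hroot : ∀ f, root f ∈ f.1) :
    Function.Injective fun a : (f : E) → ↥(f.1.erase (root f)) → Perm β =>
      blowup (rootedPerms root a) := by
  intro a a' h
  funext f ⟨v, hv⟩
  have := eq_of_blowup_eq h (hroot f) (mem_of_mem_erase hv) (by simp [rootedPerms])
  simpa [rootedPerms, hv] using this

theorem card_rootedPerms_params {r : ℕ} (hunif : ∀ f ∈ E, #f = r) (root : E → α)
    (hroot : ∀ f, root f ∈ f.1) :
    Fintype.card ((f : E) → ↥(f.1.erase (root f)) → Perm β)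
      = (Fintype.card β)! ^ ((r - 1) * #E) := by
  simp [Fintype.card_pi, Fintype.card_perm, card_erase_of_mem (hroot _), hunif, pow_mul]

end Blowup

theorem factorial_pow_le_ncard_QS {α β : Type*} [Fintype α] [DecidableEq α] [Fintype β]
    [DecidableEq β] {E : Finset (Finset α)} {r : ℕ} {c : ℝ} (hr : 0 < r)
    (hunif : ∀ f ∈ E, #f = r) (hc : 0 ≤ c) (hE : InducedDensityLe c E) {n : ℕ}
    (g : α × β ↪ Fin n) :
    (Fintype.card β)! ^ ((r - 1) * #E) ≤ {E' | QS r c n E'}.ncard := by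
  choose root hroot using fun f : E => card_pos.1 ((hunif f.1 f.2).symm ▸ hr)
  let Φ := fun a : (f : E) → ↥(f.1.erase (root f)) → Perm β =>
    (blowup (rootedPerms root a)).map (mapEmbedding g).toEmbedding
  have hQS : ∀ a, QS r c n (Φ a) := fun a =>
    ⟨by
      simp only [Φ, Finset.mem_map]
      rintro _ ⟨e, he, rfl⟩
      rw [RelEmbedding.coe_toEmbedding, mapEmbedding_apply, card_map,
        card_of_mem_blowup hunif _ he],
    (inducedDensityLe_blowup hE _).map hc g⟩
  have hΦ : Function.Injective Φ :=
    (Finset.map_injective _).comp (blowup_rootedPerms_injective root hroot)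
  calc (Fintype.card β)! ^ ((r - 1) * #E) = (Set.univ : Set ((f : E) → _)).ncard := by
        rw [Set.ncard_univ, Nat.card_eq_fintype_card, card_rootedPerms_params hunif root hroot]
    _ ≤ {E' | QS r c n E'}.ncard :=
        Set.ncard_le_ncard_of_injOn Φ (fun a _ => hQS a) hΦ.injOn (Set.toFinite _)

theorem inducedDensityLe_of_balanced {α : Type*} [Fintype α] [DecidableEq α]
    {E : Finset (Finset α)} {c : ℚ} (hα : 0 < Fintype.card α) (hne : ∅ ∉ E)
    (hdens : (#E : ℚ) = c * Fintype.card α)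
    (hbal : ∀ V : Finset α, V.Nonempty → V ⊂ univ →
      (#(E.filter (· ⊆ V)) : ℚ) * Fintype.card α ≤ #E * #V) :
    InducedDensityLe (c : ℝ) E := by
  intro V
  suffices (#(E.filter (· ⊆ V)) : ℚ) ≤ c * #V by exact_mod_cast this
  rcases V.eq_empty_or_nonempty with rfl | hV
  · rw [filter_eq_empty_iff.2 fun f hf hsub => hne (subset_empty.1 hsub ▸ hf)]
    simp
  rcases (subset_univ V).eq_or_ssubset with rfl | hVu
  · rw [filter_true_of_mem fun f _ => subset_univ f, hdens, card_univ]
  have hαq : (0 : ℚ) < Fintype.card α := by exact_mod_cast hα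
  have := hbal V hV hVu
  rw [hdens] at this
  nlinarith

theorem tendsto_log_factorial_div_mul_log :
    Tendsto (fun m : ℕ => log (m ! : ℝ) / (m * log m)) atTop (nhds 1) := by
  have hinv : Tendsto (fun m : ℕ => (log m)⁻¹) atTop (nhds 0) :=
    (tendsto_log_atTop.comp tendsto_natCast_atTop_atTop).inv_tendsto_atTop
  have hlow : Tendsto (fun m : ℕ => 1 - (log m)⁻¹) atTop (nhds 1) := by
    simpa using hinv.const_sub 1
  refine tendsto_of_tendsto_of_tendsto_of_le_of_le' hlow tendsto_const_nhds ?_ ?_ <;>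
    filter_upwards [eventually_ge_atTop 2] with m hm
  · have hlog : 0 < log (m : ℝ) := log_pos (by exact_mod_cast hm)
    have hstirling := Stirling.le_log_factorial_stirling (n := m) (by omega)
    have h2π : 0 ≤ log (2 * π) := log_nonneg (by nlinarith [pi_gt_three])
    rw [le_div_iff₀ (by positivity)]
    field_simp
    nlinarith
  · have hlog : 0 < log (m : ℝ) := log_pos (by exact_mod_cast hm)
    rw [div_le_one (by positivity), ← log_pow]
    exact log_le_log (by positivity) (by exact_mod_cast Nat.factorial_le_pow m)

theorem tendsto_mul_nat_div_div_self {t : ℕ} (ht : 0 < t) :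
    Tendsto (fun n : ℕ => (t * (n / t : ℕ) : ℝ) / n) atTop (nhds 1) := by
  have htR : (0 : ℝ) < t := by exact_mod_cast ht
  refine (tendsto_nat_floor_div_atTop.comp
    (tendsto_natCast_atTop_atTop.atTop_div_const htR)).congr' ?_
  filter_upwards [eventually_gt_atTop 0] with n hn
  simp only [Function.comp_apply, Nat.floor_div_eq_div]
  field_simp

theorem tendsto_log_nat_div_div_log {t : ℕ} (ht : 0 < t) :
    Tendsto (fun n : ℕ => log (n / t : ℕ) / log n) atTop (nhds 1) := by
  have hinv : Tendsto (fun n : ℕ => (log n)⁻¹) atTop (nhds 0) :=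
    (tendsto_log_atTop.comp tendsto_natCast_atTop_atTop).inv_tendsto_atTop
  have hratio : Tendsto (fun n : ℕ => log ((t * (n / t : ℕ) : ℝ) / n)) atTop (nhds 0) := by
    simpa [Function.comp_def] using
      (continuousAt_log one_ne_zero).tendsto.comp (tendsto_mul_nat_div_div_self ht)
  have h := ((hratio.sub_const (log t)).mul hinv).const_add 1
  rw [mul_zero, add_zero] at h
  refine h.congr' ?_
  filter_upwards [eventually_ge_atTop (2 * t)] with n hn
  have hm : (0 : ℝ) < (n / t : ℕ) := by
    exact_mod_cast Nat.div_pos (by omega) ht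
  have hn : (1 : ℝ) < n := by exact_mod_cast (by omega : 1 < n)
  have hlog : log (n : ℝ) ≠ 0 := (log_pos hn).ne'
  rw [log_div (by positivity) (by positivity), log_mul (by positivity) hm.ne']
  field_simp
  ring

theorem tendsto_mul_log_factorial_div {t : ℕ} (ht : 0 < t) :
    Tendsto (fun n : ℕ => t * log ((n / t)! : ℝ) / (n * log n)) atTop (nhds 1) := by
  have h := ((tendsto_mul_nat_div_div_self ht).mul
    (tendsto_log_factorial_div_mul_log.comp (Nat.tendsto_div_const_atTop ht.ne'))).mul
    (tendsto_log_nat_div_div_log ht)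
  simp only [mul_one] at h
  refine h.congr' ?_
  filter_upwards [eventually_ge_atTop (2 * t)] with n hn
  have hm : (1 : ℝ) < (n / t : ℕ) := by
    exact_mod_cast (Nat.le_div_iff_mul_le ht).2 (by omega)
  have hn : (1 : ℝ) < n := by exact_mod_cast (by omega : 1 < n)
  have hlogm := (log_pos hm).ne'
  have hlogn := (log_pos hn).ne'
  simp only [Function.comp_apply]
  field_simp

/-- Since `log ⌊n/t⌋! ∼ (n/t) log n`, a lower bound `⌊n/t⌋! ^ (A t)` is of the form
`n ^ (A n - o(n))`. -/
theorem exists_rpow_sub_le_of_factorial_rpow_le {t : ℕ} (ht : 0 < t) (A : ℝ) {N : ℕ → ℝ}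
    (hN : ∀ᶠ n : ℕ in atTop, (((n / t)! : ℕ) : ℝ) ^ (A * t) ≤ N n) :
    ∃ g : ℕ → ℝ, Tendsto (fun n => g n / n) atTop (nhds 0) ∧
      ∀ᶠ n : ℕ in atTop, (n : ℝ) ^ (A * n - g n) ≤ N n := by
  refine ⟨fun n => A * n - A * t * log ((n / t)! : ℝ) / log n, ?_, ?_⟩
  · have h := (tendsto_mul_log_factorial_div ht).const_mul A |>.const_sub A
    simp only [mul_one, sub_self] at h
    refine h.congr' ?_
    filter_upwards [eventually_ge_atTop 2] with n hn
    have hn : (1 : ℝ) < n := by exact_mod_cast hn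
    have hlogn := (log_pos hn).ne'
    field_simp
  · filter_upwards [hN, eventually_ge_atTop 2] with n hN hn
    have hn : (1 : ℝ) < n := by exact_mod_cast hn
    have hfac : (0 : ℝ) < ((n / t)! : ℕ) := by exact_mod_cast Nat.factorial_pos _
    rw [sub_sub_cancel, rpow_def_of_pos (by positivity), mul_div_cancel₀ _ (log_pos hn).ne']
    rwa [rpow_def_of_pos hfac, mul_comm (log _)] at hN

theorem stmt5_general (r t : ℕ) (hr : 2 ≤ r) (ht : 0 < t) (c : ℚ)
    (EH : Finset (Finset (Fin t))) (hunif : ∀ e ∈ EH, e.card = r)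
    (hdens : (EH.card : ℚ) = c * t)
    (hbal : ∀ V' : Finset (Fin t), V'.Nonempty → V' ⊂ Finset.univ →
      ((EH.filter (· ⊆ V')).card : ℚ) * t < (EH.card : ℚ) * V'.card) :
    (∃ g : ℕ → ℝ, Tendsto (fun n => g n / n) atTop (nhds 0) ∧
      ∀ᶠ n : ℕ in atTop,
        (n : ℝ) ^ (((r : ℝ) - 1) * (c : ℝ) * n - g n) ≤
          ({E | QS r (c : ℝ) n E}.ncard : ℝ)) ∧
    ∀ᶠ n : ℕ in atTop,
      (((n / t).factorial : ℝ)) ^ (((r : ℝ) - 1) * (c : ℝ) * t) ≤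
        ({E | QS r (c : ℝ) n E}.ncard : ℝ) := by
  have hne : ∅ ∉ EH := fun h => by
    have := hunif ∅ h
    simp only [card_empty] at this
    omega
  have hH : InducedDensityLe (c : ℝ) EH :=
    inducedDensityLe_of_balanced (by simpa using ht) hne (by simpa using hdens)
      fun V hV hVu => by simpa using (hbal V hV hVu).le
  have hc : (0 : ℝ) ≤ c := by
    have : (0 : ℚ) ≤ c * t := hdens ▸ Nat.cast_nonneg _
    exact_mod_cast nonneg_of_mul_nonneg_left this (by exact_mod_cast ht)
  have hexp : ((r : ℝ) - 1) * c * t = (((r - 1) * #EH : ℕ) : ℝ) := by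
    have hdensR : (#EH : ℝ) = c * t := by exact_mod_cast hdens
    rw [Nat.cast_mul, Nat.cast_sub (by omega), hdensR, Nat.cast_one, mul_assoc]
  have hcount : ∀ n, ((n / t)! : ℝ) ^ (((r : ℝ) - 1) * c * t) ≤ {E | QS r c n E}.ncard := by
    intro n
    have := factorial_pow_le_ncard_QS (by omega) hunif hc hH
      (finProdFinEquiv.toEmbedding.trans (Fin.castLEEmb (Nat.mul_div_le n t)))
    rw [Fintype.card_fin] at this
    rw [hexp, rpow_natCast]
    exact_mod_cast this
  exact ⟨exists_rpow_sub_le_of_factorial_rpow_le ht _ (.of_forall hcount), .of_forall hcount⟩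

/-- for rational `c ≥ 1/(r-1)`, given a strictly balanced `r`-uniform
hypergraph `H` on `[t]` of density `c`, we have `|Qᶜ_n ∩ Sᶜ_n| ≥ n^{(r-1)cn - o(n)}`,
and in particular `|Qᶜ_n ∩ Sᶜ_n| ≥ (⌊n/t⌋!)^{(r-1)ct}`. -/
theorem stmt5 (r t : ℕ) (hr : 2 ≤ r) (ht : 0 < t) (c : ℚ)
    (hc : 1 / ((r : ℚ) - 1) ≤ c)
    (EH : Finset (Finset (Fin t))) (hunif : ∀ e ∈ EH, e.card = r)
    (hdens : (EH.card : ℚ) = c * t)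
    (hbal : ∀ V' : Finset (Fin t), V'.Nonempty → V' ⊂ Finset.univ →
      ((EH.filter (· ⊆ V')).card : ℚ) * t < (EH.card : ℚ) * V'.card) :
    (∃ g : ℕ → ℝ, Tendsto (fun n => g n / n) atTop (nhds 0) ∧
      ∀ᶠ n : ℕ in atTop,
        (n : ℝ) ^ (((r : ℝ) - 1) * (c : ℝ) * n - g n) ≤
          ({E | QS r (c : ℝ) n E}.ncard : ℝ)) ∧
    ∀ᶠ n : ℕ in atTop,
      (((n / t).factorial : ℝ)) ^ (((r : ℝ) - 1) * (c : ℝ) * t) ≤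
        ({E | QS r (c : ℝ) n E}.ncard : ℝ) :=
  stmt5_general r t hr ht c EH hunif hdens hbal
end

section
/- Let r ≥ 2, c ≥ 1/(r−1), ε > 1/c, and k ≥ r be fixed. Then for all sufficiently large n there exists an r-uniform hypergraph G on [n] with at least (1/2)·n^{−δ}·C(n,r) edges (for any fixed δ with 1/c < δ < ε) such that every subset of at most k vertices spans at most c times as many edges as vertices; consequently the number of r-uniform hypergraphs on [n] in which every induced subhypergraph on at most k vertices H satisfies e(H) ≤ c·v(H) is at least 2^{n^{r−ε}}. -/
/-!
Keep each `r`-subset of `[n]` independently with probability `p = n^{-δ}`, then delete one edge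
from every surviving family of `⌊c s⌋₊ + 1` edges inside an `s`-set, `s ≤ k`. Such a family
survives with probability `p^{⌊c s⌋₊ + 1}` and there are at most `n^s C(k,r)^{⌊c s⌋₊ + 1}` of
them, so since `δ c > 1` and `r c > 1` their expected number is `o(n^{r-δ})`, whereas the expected
number of edges is `p C(n,r) = Θ(n^{r-δ})`. What remains is locally sparse with at least half
the expected number of edges, and so is each of its `2^{#E}` subfamilies.
-/

open Filter Finset

namespace Finset

variable {α : Type*} [DecidableEq α]

theorem sum_biUnion_le_sum_sum {ι : Type*} {f : α → ℝ} (hf : ∀ x, 0 ≤ f x)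
    (s : Finset ι) (t : ι → Finset α) :
    ∑ x ∈ s.biUnion t, f x ≤ ∑ i ∈ s, ∑ x ∈ t i, f x := by
  classical
  induction s using Finset.induction_on with
  | empty => simp
  | insert i s hi ih =>
    rw [biUnion_insert, sum_insert hi]
    have h := sum_union_inter (s₁ := t i) (s₂ := s.biUnion t) (f := f)
    have := sum_nonneg fun x (_ : x ∈ t i ∩ s.biUnion t) => hf x
    linarith

theorem sum_superset_pow_mul_pow {R : Type*} [CommSemiring R] {s t : Finset α} (h : s ⊆ t)
    (a b : R) :
    ∑ u ∈ t.powerset with s ⊆ u, a ^ #u * b ^ (#t - #u) = a ^ #s * (a + b) ^ (#t - #s) := by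
  have hIcc : {u ∈ t.powerset | s ⊆ u} = Icc s t := by ext; simp [and_comm]
  rw [hIcc, Icc_eq_image_powerset h, sum_image fun u hu v hv huv => ?_,
    ← card_sdiff_of_subset h, ← sum_pow_mul_eq_add_pow, mul_sum]
  · refine sum_congr rfl fun u hu => ?_
    have hu' := mem_powerset.1 hu
    have hdisj : Disjoint s u := disjoint_of_subset_right hu' disjoint_sdiff
    rw [card_union_of_disjoint hdisj, card_sdiff_of_subset h, pow_add, mul_assoc]
    congr 3
    have := card_le_card hu'
    rw [card_sdiff_of_subset h] at this
    omega
  · have hu' := mem_powerset.1 (mem_coe.1 hu)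
    have hv' := mem_powerset.1 (mem_coe.1 hv)
    rw [← union_sdiff_cancel_left (disjoint_of_subset_right hu' disjoint_sdiff),
      ← union_sdiff_cancel_left (disjoint_of_subset_right hv' disjoint_sdiff), huv]

theorem sum_pow_mul_one_sub_pow_mul_card_filter_subset {t : Finset α} {𝓑 : Finset (Finset α)}
    (h𝓑 : ∀ s ∈ 𝓑, s ⊆ t) (p : ℝ) :
    ∑ u ∈ t.powerset, p ^ #u * (1 - p) ^ (#t - #u) * #{s ∈ 𝓑 | s ⊆ u} = ∑ s ∈ 𝓑, p ^ #s := by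
  simp_rw [card_filter, Nat.cast_sum, mul_sum]
  rw [sum_comm]
  refine sum_congr rfl fun s hs => ?_
  simp_rw [Nat.cast_ite, Nat.cast_one, Nat.cast_zero, mul_boole, ← sum_filter,
    sum_superset_pow_mul_pow (h𝓑 s hs)]
  simp

theorem exists_subset_card_sub_card_filter_subset_ge {t : Finset α} {𝓑 : Finset (Finset α)}
    (h𝓑 : ∀ s ∈ 𝓑, s ⊆ t) {p : ℝ} (hp₀ : 0 < p) (hp₁ : p < 1) :
    ∃ u ⊆ t, p * #t - ∑ s ∈ 𝓑, p ^ #s ≤ #u - #{s ∈ 𝓑 | s ⊆ u} := by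
  set w : Finset α → ℝ := fun u => p ^ #u * (1 - p) ^ (#t - #u)
  have hq : 0 < 1 - p := by linarith
  have hw : ∀ u, 0 < w u := fun u => by positivity
  have htotal : ∑ u ∈ t.powerset, w u = 1 := by simp [w, sum_pow_mul_eq_add_pow]
  have hbad : ∑ u ∈ t.powerset, w u * #{s ∈ 𝓑 | s ⊆ u} = ∑ s ∈ 𝓑, p ^ #s :=
    sum_pow_mul_one_sub_pow_mul_card_filter_subset h𝓑 p
  have hsize : ∑ u ∈ t.powerset, w u * #u = p * #t := by
    have hsing : ∑ u ∈ t.powerset, w u * #{s ∈ t.powersetCard 1 | s ⊆ u}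
        = ∑ s ∈ t.powersetCard 1, p ^ #s :=
      sum_pow_mul_one_sub_pow_mul_card_filter_subset (fun s hs => (mem_powersetCard.1 hs).1) p
    have hsingletons : ∑ s ∈ t.powersetCard 1, p ^ #s = #t * p := by
      rw [sum_congr rfl fun s hs => by rw [(mem_powersetCard.1 hs).2, pow_one], sum_const,
        card_powersetCard, Nat.choose_one_right, nsmul_eq_mul]
    rw [mul_comm p, ← hsingletons, ← hsing]
    refine sum_congr rfl fun u hu => ?_
    have : {s ∈ t.powersetCard 1 | s ⊆ u} = u.powersetCard 1 := by
      ext s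
      simp only [mem_filter, mem_powersetCard]
      exact ⟨fun h => ⟨h.2, h.1.2⟩, fun h => ⟨⟨h.1.trans (mem_powerset.1 hu), h.2⟩, h.1⟩⟩
    rw [this, card_powersetCard, Nat.choose_one_right]
  obtain ⟨u, hu, hle⟩ := exists_le_of_sum_le (s := t.powerset)
    (f := fun u => w u * (p * #t - ∑ s ∈ 𝓑, p ^ #s))
    (g := fun u => w u * (#u - #{s ∈ 𝓑 | s ⊆ u})) ⟨∅, empty_mem_powerset t⟩ <| by
      simp only [← sum_mul, htotal, one_mul, mul_sub, sum_sub_distrib, hsize, hbad, le_refl]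
  exact ⟨u, mem_powerset.1 hu, le_of_mul_le_mul_left hle (hw u)⟩

theorem exists_subset_card_le_add_forall_not_subset {𝓑 : Finset (Finset α)}
    (h𝓑 : ∀ s ∈ 𝓑, s.Nonempty) (u : Finset α) :
    ∃ v ⊆ u, #u ≤ #v + #{s ∈ 𝓑 | s ⊆ u} ∧ ∀ s ∈ 𝓑, ¬ s ⊆ v := by
  induction 𝓑 using Finset.induction_on with
  | empty => exact ⟨u, subset_rfl, by simp, by simp⟩
  | insert s 𝓑 hs ih =>
    obtain ⟨v, hvu, hcard, hfree⟩ := ih fun s' hs' => h𝓑 s' (mem_insert_of_mem hs')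
    have hcount : #{s' ∈ 𝓑 | s' ⊆ u} ≤ #{s' ∈ insert s 𝓑 | s' ⊆ u} :=
      card_le_card (filter_subset_filter _ (subset_insert s 𝓑))
    by_cases hsv : s ⊆ v
    · obtain ⟨a, ha⟩ := h𝓑 s (mem_insert_self s 𝓑)
      refine ⟨v.erase a, (erase_subset a v).trans hvu, ?_, ?_⟩
      · rw [filter_insert, if_pos (hsv.trans hvu),
          card_insert_of_notMem fun h => hs (mem_filter.1 h).1, card_erase_of_mem (hsv ha)]
        have := card_pos.2 ⟨a, hsv ha⟩
        omega
      · intro s' hs' hs'v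
        rcases mem_insert.1 hs' with rfl | hs'
        · exact notMem_erase a v (hs'v ha)
        · exact hfree s' hs' (hs'v.trans (erase_subset a v))
    · refine ⟨v, hvu, hcard.trans (by omega), fun s' hs' => ?_⟩
      rcases mem_insert.1 hs' with rfl | hs'
      · exact hsv
      · exact hfree s' hs'

theorem two_pow_card_le_ncard {β : Type*} [Finite β] {𝒮 : Set (Finset β)}
    (h𝒮 : ∀ E ∈ 𝒮, ∀ E' ⊆ E, E' ∈ 𝒮) {E : Finset β} (hE : E ∈ 𝒮) : 2 ^ #E ≤ 𝒮.ncard := by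
  rw [← card_powerset, ← Set.ncard_coe_finset]
  exact Set.ncard_le_ncard (fun E' hE' => h𝒮 E hE E' (mem_powerset.1 hE')) (Set.toFinite _)

/-- The alteration method: keep each element of `t` independently with probability `p`,
then delete one element from each member of `𝓑` that survived. -/
theorem exists_subset_forall_not_subset_card_ge {t : Finset α} {𝓑 : Finset (Finset α)}
    (h𝓑t : ∀ s ∈ 𝓑, s ⊆ t) (h𝓑 : ∀ s ∈ 𝓑, s.Nonempty) {p : ℝ} (hp₀ : 0 < p) (hp₁ : p < 1) :
    ∃ u ⊆ t, (∀ s ∈ 𝓑, ¬ s ⊆ u) ∧ p * #t - ∑ s ∈ 𝓑, p ^ #s ≤ #u := by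
  obtain ⟨u, hut, hu⟩ := exists_subset_card_sub_card_filter_subset_ge h𝓑t hp₀ hp₁
  obtain ⟨v, hvu, hcard, hfree⟩ := exists_subset_card_le_add_forall_not_subset h𝓑 u
  refine ⟨v, hvu.trans hut, hfree, hu.trans ?_⟩
  have : (#u : ℝ) ≤ #v + #{s ∈ 𝓑 | s ⊆ u} := by exact_mod_cast hcard
  linarith

end Finset

section LocalSparsity

variable {α : Type*} [DecidableEq α]

def IsLocallySparse (k : ℕ) (c : ℝ) (E : Finset (Finset α)) : Prop :=
  ∀ S : Finset α, #S ≤ k → (#{e ∈ E | e ⊆ S} : ℝ) ≤ c * #S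

theorem IsLocallySparse.mono {k : ℕ} {c : ℝ} {E E' : Finset (Finset α)}
    (h : IsLocallySparse k c E) (hE' : E' ⊆ E) : IsLocallySparse k c E' := fun S hS =>
  le_trans (by exact_mod_cast card_le_card (filter_subset_filter _ hE')) (h S hS)

variable [Fintype α]

/-- The minimal obstructions to `IsLocallySparse k c` for `r`-uniform families. -/
noncomputable def denseConfigs (r k : ℕ) (c : ℝ) : Finset (Finset (Finset α)) :=
  (range (k + 1)).biUnion fun s => (powersetCard s univ).biUnion fun S =>
    (S.powersetCard r).powersetCard (⌊c * s⌋₊ + 1)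

theorem mem_denseConfigs {r k : ℕ} {c : ℝ} {F : Finset (Finset α)} :
    F ∈ denseConfigs r k c ↔
      ∃ S : Finset α, #S ≤ k ∧ F ⊆ S.powersetCard r ∧ #F = ⌊c * #S⌋₊ + 1 := by
  simp only [denseConfigs, mem_biUnion, mem_range, mem_powersetCard, subset_univ, true_and]
  constructor
  · rintro ⟨s, hs, S, rfl, hF, hFcard⟩
    exact ⟨S, by omega, hF, hFcard⟩
  · rintro ⟨S, hS, hF, hFcard⟩
    exact ⟨#S, by omega, S, rfl, hF, hFcard⟩

theorem isLocallySparse_of_forall_not_subset {r k : ℕ} {c : ℝ} (hc : 0 ≤ c)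
    {E : Finset (Finset α)} (hE : ∀ e ∈ E, #e = r) (h : ∀ F ∈ denseConfigs r k c, ¬ F ⊆ E) :
    IsLocallySparse k c E := by
  intro S hS
  by_contra! hlt
  have hm : ⌊c * #S⌋₊ + 1 ≤ #{e ∈ E | e ⊆ S} := (Nat.floor_lt (by positivity)).2 hlt
  obtain ⟨F, hF, hFcard⟩ := exists_subset_card_eq hm
  refine h F (mem_denseConfigs.2 ⟨S, hS, fun e he => ?_, hFcard⟩) (hF.trans (filter_subset _ _))
  obtain ⟨heE, heS⟩ := mem_filter.1 (hF he)
  exact mem_powersetCard.2 ⟨heS, hE e heE⟩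

theorem sum_pow_card_denseConfigs_le (r k : ℕ) (c : ℝ) {p : ℝ} (hp : 0 ≤ p) :
    ∑ F ∈ denseConfigs (α := α) r k c, p ^ #F ≤
      ∑ s ∈ range (k + 1), (Fintype.card α : ℝ) ^ s * (k.choose r * p) ^ (⌊c * s⌋₊ + 1) := by
  have hf : ∀ F : Finset (Finset α), 0 ≤ p ^ #F := fun F => by positivity
  refine (sum_biUnion_le_sum_sum hf _ _).trans <| sum_le_sum fun s hs => ?_
  refine (sum_biUnion_le_sum_sum hf _ _).trans ?_
  set m := ⌊c * s⌋₊ + 1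
  have hsk : s ≤ k := Nat.lt_succ_iff.1 (mem_range.1 hs)
  have hS : ∀ S ∈ powersetCard s (univ : Finset α),
      ∑ F ∈ (S.powersetCard r).powersetCard m, p ^ #F ≤ (k.choose r * p) ^ m := by
    intro S hS
    rw [sum_congr rfl fun F hF => by rw [(mem_powersetCard.1 hF).2], sum_const,
      card_powersetCard, card_powersetCard, (mem_powersetCard.1 hS).2, nsmul_eq_mul, mul_pow]
    gcongr
    exact_mod_cast (Nat.choose_le_pow _ m).trans
      (Nat.pow_le_pow_left (Nat.choose_le_choose r hsk) m)
  refine (sum_le_sum hS).trans ?_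
  rw [sum_const, card_powersetCard, card_univ, nsmul_eq_mul]
  gcongr
  exact_mod_cast Nat.choose_le_pow _ s

theorem exists_isLocallySparse_card_ge (r k : ℕ) {c : ℝ} (hc : 0 ≤ c) {p : ℝ}
    (hp₀ : 0 < p) (hp₁ : p < 1) :
    ∃ E : Finset (Finset α), (∀ e ∈ E, #e = r) ∧
      p * (Fintype.card α).choose r - ∑ s ∈ range (k + 1),
        (Fintype.card α : ℝ) ^ s * (k.choose r * p) ^ (⌊c * s⌋₊ + 1) ≤ #E ∧
      IsLocallySparse k c E := by
  have hsub : ∀ F ∈ denseConfigs (α := α) r k c, F ⊆ powersetCard r univ := by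
    intro F hF
    obtain ⟨S, -, hFS, -⟩ := mem_denseConfigs.1 hF
    exact hFS.trans (powersetCard_mono (subset_univ S))
  have hne : ∀ F ∈ denseConfigs (α := α) r k c, F.Nonempty := by
    intro F hF
    obtain ⟨S, -, -, hFcard⟩ := mem_denseConfigs.1 hF
    exact card_pos.1 (by omega)
  obtain ⟨E, hE, hfree, hcard⟩ := exists_subset_forall_not_subset_card_ge hsub hne hp₀ hp₁
  have hEr : ∀ e ∈ E, #e = r := fun e he => (mem_powersetCard.1 (hE he)).2
  refine ⟨E, hEr, ?_, isLocallySparse_of_forall_not_subset hc hEr hfree⟩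
  rw [card_powersetCard, card_univ] at hcard
  linarith [sum_pow_card_denseConfigs_le (α := α) r k c hp₀.le]

end LocalSparsity

theorem cast_sub_mul_floor_lt {r s : ℕ} {c δ : ℝ} (hδ : 0 < δ) (hδc : 1 < δ * c)
    (hrc : 1 < r * c) : (s : ℝ) - δ * ⌊c * s⌋₊ < r := by
  rcases lt_or_ge s r with hsr | hrs
  · have : (s : ℝ) < r := by exact_mod_cast hsr
    have : 0 ≤ δ * ⌊c * s⌋₊ := by positivity
    linarith
  · have hrs : (r : ℝ) ≤ s := by exact_mod_cast hrs
    have hfloor : c * s - 1 < ⌊c * s⌋₊ := by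
      have := Nat.lt_floor_add_one (c * s)
      linarith
    nlinarith

open Asymptotics in
theorem eventually_const_mul_rpow_le_choose (r : ℕ) {a : ℝ} (ha : a < r) (C : ℝ) :
    ∀ᶠ n : ℕ in atTop, C * (n : ℝ) ^ a ≤ n.choose r := by
  obtain ⟨K, hK, hbig⟩ := (isTheta_choose r).symm.isBigO.exists_pos
  have hgrow : ∀ᶠ n : ℕ in atTop, K * |C| ≤ (n : ℝ) ^ (r - a) :=
    ((tendsto_rpow_atTop (by linarith)).comp tendsto_natCast_atTop_atTop).eventually_ge_atTop _
  filter_upwards [hbig.bound, hgrow, eventually_gt_atTop 0] with n hn hgrow hn0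
  have hn0 : (0 : ℝ) < n := by exact_mod_cast hn0
  simp only [norm_pow, Real.norm_natCast] at hn
  have hsplit : (n : ℝ) ^ r = (n : ℝ) ^ (r - a) * (n : ℝ) ^ a := by
    rw [← Real.rpow_add hn0, sub_add_cancel, Real.rpow_natCast]
  have hpos : 0 < (n : ℝ) ^ a := by positivity
  have : K * (|C| * (n : ℝ) ^ a) ≤ K * n.choose r := by nlinarith
  calc C * (n : ℝ) ^ a ≤ |C| * (n : ℝ) ^ a := by gcongr; exact le_abs_self C
    _ ≤ n.choose r := le_of_mul_le_mul_left this hK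

theorem eventually_const_mul_rpow_le_rpow_mul_choose (r : ℕ) {a δ : ℝ} (h : a + δ < r)
    (C : ℝ) : ∀ᶠ n : ℕ in atTop, C * (n : ℝ) ^ a ≤ (n : ℝ) ^ (-δ) * n.choose r := by
  filter_upwards [eventually_const_mul_rpow_le_choose r h C, eventually_gt_atTop 0]
    with n hn hn0
  have hn0 : (0 : ℝ) < n := by exact_mod_cast hn0
  calc C * (n : ℝ) ^ a = (n : ℝ) ^ (-δ) * (C * (n : ℝ) ^ (a + δ)) := by
        rw [Real.rpow_add hn0, Real.rpow_neg hn0.le]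
        field_simp
    _ ≤ (n : ℝ) ^ (-δ) * n.choose r := by gcongr

theorem eventually_sum_pow_le_half_mul_choose {r k : ℕ} {δ A : ℝ} {m : ℕ → ℕ}
    (hm : ∀ s ∈ range (k + 1), (s : ℝ) - δ * m s + δ < r) :
    ∀ᶠ n : ℕ in atTop, ∑ s ∈ range (k + 1), (n : ℝ) ^ s * (A * (n : ℝ) ^ (-δ)) ^ m s ≤
      1 / 2 * (n : ℝ) ^ (-δ) * n.choose r := by
  have hterm : ∀ s ∈ range (k + 1), ∀ᶠ n : ℕ in atTop,
      (2 * (k + 1) * A ^ m s) * (n : ℝ) ^ ((s : ℝ) - δ * m s) ≤ (n : ℝ) ^ (-δ) * n.choose r :=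
    fun s hs => eventually_const_mul_rpow_le_rpow_mul_choose r (hm s hs) _
  filter_upwards [(eventually_all_finset _).2 hterm, eventually_gt_atTop 0] with n hn hn0
  have hn0 : (0 : ℝ) < n := by exact_mod_cast hn0
  calc ∑ s ∈ range (k + 1), (n : ℝ) ^ s * (A * (n : ℝ) ^ (-δ)) ^ m s
      ≤ ∑ s ∈ range (k + 1), (n : ℝ) ^ (-δ) * n.choose r / (2 * (k + 1)) := by
        refine sum_le_sum fun s hs => ?_
        have hpow : (n : ℝ) ^ s * (A * (n : ℝ) ^ (-δ)) ^ m s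
            = A ^ m s * (n : ℝ) ^ ((s : ℝ) - δ * m s) := by
          rw [mul_pow, ← Real.rpow_mul_natCast hn0.le, neg_mul, Real.rpow_neg hn0.le,
            Real.rpow_sub hn0, Real.rpow_natCast]
          ring
        rw [hpow, le_div_iff₀ (by positivity)]
        linarith [hn s hs]
    _ = 1 / 2 * (n : ℝ) ^ (-δ) * n.choose r := by
        rw [sum_const, card_range, nsmul_eq_mul]
        field_simp
        push_cast
        ring

theorem stmt7_general (r k : ℕ) (hr : 2 ≤ r) (c ε δ : ℝ)
    (hc : 1 / ((r : ℝ) - 1) ≤ c) (hδ1 : 1 / c < δ) (hδ2 : δ < ε) :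
    ∀ᶠ n : ℕ in atTop,
      (∃ E : Finset (Finset (Fin n)), (∀ f ∈ E, f.card = r) ∧
        (1 / 2) * (n : ℝ) ^ (-δ) * (n.choose r : ℝ) ≤ (E.card : ℝ) ∧
        ∀ S : Finset (Fin n), S.card ≤ k →
          ((E.filter (· ⊆ S)).card : ℝ) ≤ c * S.card) ∧
      (2 : ℝ) ^ ((n : ℝ) ^ ((r : ℝ) - ε)) ≤
        (({E : Finset (Finset (Fin n)) | (∀ f ∈ E, f.card = r) ∧
          ∀ S : Finset (Fin n), S.card ≤ k →
            ((E.filter (· ⊆ S)).card : ℝ) ≤ c * S.card}.ncard : ℝ)) := by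
  have hr1 : (0 : ℝ) < r - 1 := by
    have : (2 : ℝ) ≤ r := by exact_mod_cast hr
    linarith
  have hc0 : 0 < c := (one_div_pos.2 hr1).trans_le hc
  have hδ0 : 0 < δ := (one_div_pos.2 hc0).trans hδ1
  have hδc : 1 < δ * c := by rwa [div_lt_iff₀ hc0] at hδ1
  have hrc : 1 < r * c := by
    rw [div_le_iff₀ hr1] at hc
    linarith
  have hexp : ∀ s ∈ range (k + 1), (s : ℝ) - δ * ↑(⌊c * s⌋₊ + 1) + δ < r := fun s _ => by
    have := cast_sub_mul_floor_lt (s := s) hδ0 hδc hrc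
    push_cast
    linarith
  filter_upwards [eventually_sum_pow_le_half_mul_choose (A := k.choose r) hexp,
    eventually_const_mul_rpow_le_rpow_mul_choose r (a := r - ε) (δ := δ) (by linarith) 2,
    eventually_ge_atTop 2] with n hsum hpow hn
  have hp₀ : 0 < (n : ℝ) ^ (-δ) := by positivity
  have hp₁ : (n : ℝ) ^ (-δ) < 1 :=
    Real.rpow_lt_one_of_one_lt_of_neg (by exact_mod_cast hn) (by linarith)
  obtain ⟨E, hEr, hEcard, hE⟩ := exists_isLocallySparse_card_ge (α := Fin n) r k hc0.le hp₀ hp₁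
  rw [Fintype.card_fin] at hEcard
  refine ⟨⟨E, hEr, by linarith, hE⟩, ?_⟩
  calc (2 : ℝ) ^ ((n : ℝ) ^ ((r : ℝ) - ε)) ≤ 2 ^ (#E : ℝ) :=
        Real.rpow_le_rpow_of_exponent_le one_le_two (by linarith)
    _ ≤ _ := by
      rw [Real.rpow_natCast]
      norm_cast
      refine two_pow_card_le_ncard ?_ ?_
      · exact fun E hE E' hE' => ⟨fun f hf => hE.1 f (hE' hf), IsLocallySparse.mono hE.2 hE'⟩
      · exact ⟨hEr, hE⟩

/-- for `1/c < δ < ε` and large `n` there is an `r`-uniform hypergraph on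
`[n]` with at least `(1/2)·n^{-δ}·C(n,r)` edges in which every set of at most `k`
vertices spans at most `c` times as many edges as vertices; consequently the number of
`r`-uniform hypergraphs on `[n]` with this local sparsity is at least `2^{n^{r-ε}}`. -/
theorem stmt7 (r k : ℕ) (hr : 2 ≤ r) (hk : r ≤ k) (c ε δ : ℝ)
    (hc : 1 / ((r : ℝ) - 1) ≤ c) (hε : 1 / c < ε) (hδ1 : 1 / c < δ) (hδ2 : δ < ε) :
    ∀ᶠ n : ℕ in atTop,
      (∃ E : Finset (Finset (Fin n)), (∀ f ∈ E, f.card = r) ∧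
        (1 / 2) * (n : ℝ) ^ (-δ) * (n.choose r : ℝ) ≤ (E.card : ℝ) ∧
        ∀ S : Finset (Fin n), S.card ≤ k →
          ((E.filter (· ⊆ S)).card : ℝ) ≤ c * S.card) ∧
      (2 : ℝ) ^ ((n : ℝ) ^ ((r : ℝ) - ε)) ≤
        (({E : Finset (Finset (Fin n)) | (∀ f ∈ E, f.card = r) ∧
          ∀ S : Finset (Fin n), S.card ≤ k →
            ((E.filter (· ⊆ S)).card : ℝ) ≤ c * S.card}.ncard : ℝ)) :=
  stmt7_general r k hr c ε δ hc hδ1 hδ2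
end

section
/- Let H be a hereditary class of finite L-structures over a finite relational language L of arity r, in which every structure is totally k-bounded (every relation R(x_1,...,x_s) satisfies: for every proper nonempty partition of variables, fixing one side admits fewer than k completions to a tuple in R) and suppose every component of every member of H has size at most m, with m' ≤ m maximal such that H contains structures with arbitrarily many components of size m', and m' ≥ 2. Then |H_n| ≤ n^{n(1−1/m'+o(1))}. -/
open FirstOrder FirstOrder.Language Filter

/-- The structure induced on `N` by pulling back the relations of a relational structure
on `M` along a map `f : N → M`. -/
def pullbackStruct (L : FirstOrder.Language) [L.IsRelational] {M N : Type*}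
    [L.Structure M] (f : N → M) : L.Structure N where
  funMap := fun {_} F _ => isEmptyElim F
  RelMap := fun {_} R v => Structure.RelMap R (f ∘ v)

/-- One step of a path inside `A`. -/
def StepIn (L : FirstOrder.Language) {M : Type*} [L.Structure M] (A : Set M)
    (x y : M) : Prop :=
  x ∈ A ∧ y ∈ A ∧ ∃ (n : ℕ) (R : L.Relations n) (v : Fin n → M),
    Structure.RelMap R v ∧ (∀ i, v i ∈ A) ∧ x ∈ Set.range v ∧ y ∈ Set.range v

/-- A set is connected if any two of its elements are joined by a path of overlapping
relation tuples inside the set. -/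
def IsConnectedSet (L : FirstOrder.Language) {M : Type*} [L.Structure M]
    (A : Set M) : Prop :=
  ∀ a ∈ A, ∀ b ∈ A, Relation.ReflTransGen (StepIn L A) a b

/-- A component is a maximal connected set. -/
def IsComponent (L : FirstOrder.Language) {M : Type*} [L.Structure M]
    (A : Set M) : Prop :=
  IsConnectedSet L A ∧ ∀ B : Set M, A ⊆ B → IsConnectedSet L B → B = A

/-- Totally `k`-bounded structure. -/
def TotallyBddStruct (L : FirstOrder.Language) (M : Type*) [L.Structure M]
    (k : ℕ) : Prop :=
  ∀ (s : ℕ) (R : L.Relations s) (I : Finset (Fin s)), I.Nonempty → I ≠ Finset.univ →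
    ∀ v : Fin s → M,
      {w : Fin s → M | Structure.RelMap R w ∧ ∀ i ∈ I, w i = v i}.Finite ∧
      {w : Fin s → M | Structure.RelMap R w ∧ ∀ i ∈ I, w i = v i}.ncard < k

/-!
Send each element to the least element of its component. Every relation tuple lies inside one
fibre of this map and the fibres are the components, of size at most `m`, so once the map is known
only `2^{O(n)}` structures remain. The fixed points of the map are the components; as only
boundedly many elements lie in components of size greater than `m'`, there are at least
`(n - O(1)) / m'` of them, and there are at most `2^n n^{n-t}` self-maps of `Fin n` with at least
`t` fixed points. Hence `|H_n| ≤ 2^{O(n)} n^{n - n/m' + O(1)}`.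
-/

theorem StepIn.mono {L : FirstOrder.Language} {M : Type*} [L.Structure M] {A B : Set M}
    (h : A ⊆ B) {x y : M} (hs : StepIn L A x y) : StepIn L B x y := by
  obtain ⟨hx, hy, n, R, v, hR, hv, hxr, hyr⟩ := hs
  exact ⟨h hx, h hy, n, R, v, hR, fun i => h (hv i), hxr, hyr⟩

theorem Set.ncard_le_mul_ncard_image {α β : Type*} {X : Set α} (hX : X.Finite) (f : α → β)
    (k : ℕ) (hk : ∀ x ∈ X, (X ∩ f ⁻¹' {f x}).ncard ≤ k) :
    X.ncard ≤ k * (f '' X).ncard := by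
  classical
  rw [Set.ncard_eq_toFinset_card X hX, Set.ncard_eq_toFinset_card _ (hX.image f),
    Set.Finite.toFinset_image]
  refine Finset.card_le_mul_card_image _ k fun b hb => ?_
  obtain ⟨x, hx, rfl⟩ := Finset.mem_image.1 hb
  rw [← Set.ncard_coe_finset]
  convert hk x ((Set.Finite.mem_toFinset hX).1 hx) using 2
  ext; simp

namespace BoundedComponents

open Finset Structure

section Component

variable {L : FirstOrder.Language} {M : Type*} [L.Structure M]

variable (L) in
def component (x : M) : Set M :=
  ⋃₀ {A | IsConnectedSet L A ∧ x ∈ A}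

theorem mem_component_self (x : M) : x ∈ component L x :=
  Set.mem_sUnion.2 ⟨{x}, ⟨fun a ha b hb => by rw [ha, hb], rfl⟩, rfl⟩

theorem subset_component {A : Set M} (hA : IsConnectedSet L A) {x : M}
    (hx : x ∈ A) : A ⊆ component L x :=
  Set.subset_sUnion_of_mem ⟨hA, hx⟩

theorem isConnectedSet_component (x : M) : IsConnectedSet L (component L x) := by
  have lift {A : Set M} (hA : IsConnectedSet L A) (hx : x ∈ A) {a b : M} (hab : a ∈ A)
      (hb : b ∈ A) : Relation.ReflTransGen (StepIn L (component L x)) a b :=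
    Relation.ReflTransGen.mono (fun _ _ => StepIn.mono (subset_component hA hx)) _ _
      (hA a hab b hb)
  rintro a ⟨A, ⟨hA, hxA⟩, haA⟩ b ⟨B, ⟨hB, hxB⟩, hbB⟩
  exact (lift hA hxA haA hxA).trans (lift hB hxB hxB hbB)

theorem component_eq_of_mem {x y : M} (h : y ∈ component L x) :
    component L y = component L x := by
  have hxy : component L x ⊆ component L y := subset_component (isConnectedSet_component x) h
  exact (subset_component (isConnectedSet_component y) (hxy (mem_component_self x))).antisymm hxy

theorem isComponent_component (x : M) : IsComponent L (component L x) :=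
  ⟨isConnectedSet_component x, fun _ hsub hB =>
    (subset_component hB (hsub (mem_component_self x))).antisymm hsub⟩

theorem component_eq_of_relMap {s : ℕ} {R : L.Relations s} {v : Fin s → M}
    (hR : Structure.RelMap R v) (i j : Fin s) : component L (v i) = component L (v j) := by
  have hv : IsConnectedSet L (Set.range v) := fun a ha b hb =>
    .single ⟨ha, hb, s, R, v, hR, Set.mem_range_self, ha, hb⟩
  exact component_eq_of_mem (subset_component hv ⟨j, rfl⟩ ⟨i, rfl⟩)

variable [LinearOrder M] [WellFoundedLT M]

variable (L) in
noncomputable def compRep (x : M) : M :=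
  wellFounded_lt.min (component L x) ⟨x, mem_component_self x⟩

theorem compRep_mem (x : M) : compRep L x ∈ component L x :=
  wellFounded_lt.min_mem _ _

theorem compRep_eq_compRep_iff {x y : M} :
    compRep L x = compRep L y ↔ component L x = component L y := by
  refine ⟨fun h => ?_, fun h => by simp only [compRep, h]⟩
  rw [← component_eq_of_mem (compRep_mem x), h, component_eq_of_mem (compRep_mem y)]

theorem compRep_compRep (x : M) : compRep L (compRep L x) = compRep L x :=
  compRep_eq_compRep_iff.2 (component_eq_of_mem (compRep_mem x))

theorem mem_component_of_compRep_eq {y z : M} (h : compRep L z = y) : z ∈ component L y := by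
  rw [← h, component_eq_of_mem (compRep_mem z)]
  exact mem_component_self z

theorem exists_compRep_eq_of_relMap [Nonempty M] {s : ℕ} {R : L.Relations s}
    {v : Fin s → M} (hR : Structure.RelMap R v) : ∃ y, ∀ i, compRep L (v i) = y := by
  rcases isEmpty_or_nonempty (Fin s) with hs | ⟨⟨i₀⟩⟩
  · exact ⟨Classical.arbitrary M, isEmptyElim⟩
  · exact ⟨compRep L (v i₀), fun i =>
      compRep_eq_compRep_iff.2 (component_eq_of_relMap hR i i₀)⟩

end Component

section ComponentCount

variable {L : FirstOrder.Language} {M : Type*} [L.Structure M] [Fintype M]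

theorem card_filter_ncard_component_eq_le (j : ℕ) :
    #{x : M | (component L x).ncard = j} ≤
      j * {A : Set M | IsComponent L A ∧ A.ncard = j}.ncard := by
  rw [← Set.ncard_coe_finset, coe_filter_univ]
  calc _ ≤ j * (component L '' {x : M | (component L x).ncard = j}).ncard := by
        refine Set.ncard_le_mul_ncard_image (Set.toFinite _) _ _ fun x hx => ?_
        refine (Set.ncard_le_ncard (fun z hz => ?_) (Set.toFinite _)).trans hx.le
        rw [← hz.2]
        exact mem_component_self z
    _ ≤ _ := by
        gcongr
        · exact Set.toFinite _
        · rintro _ ⟨x, hx, rfl⟩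
          exact ⟨isComponent_component x, hx⟩

variable [LinearOrder M]

theorem card_filter_ncard_component_le (m' : ℕ) :
    #{x : M | (component L x).ncard ≤ m'} ≤ m' * #{x : M | compRep L x = x} := by
  rw [← Set.ncard_coe_finset, ← Set.ncard_coe_finset, coe_filter_univ, coe_filter_univ]
  calc _ ≤ m' * (compRep L '' {x : M | (component L x).ncard ≤ m'}).ncard := by
        refine Set.ncard_le_mul_ncard_image (Set.toFinite _) _ _ fun x hx => ?_
        refine (Set.ncard_le_ncard (fun z hz => ?_) (Set.toFinite _)).trans hx
        rw [← compRep_eq_compRep_iff.1 hz.2]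
        exact mem_component_self z
    _ ≤ _ := by
        gcongr
        · exact Set.toFinite _
        · rintro _ ⟨x, -, rfl⟩
          exact compRep_compRep x

theorem card_sub_le_mul_card_fixedPoints_compRep {m m' : ℕ} (N : ℕ → ℕ)
    (hcomp : ∀ x : M, (component L x).ncard ≤ m)
    (hN : ∀ j, m' < j → {A : Set M | IsComponent L A ∧ A.ncard = j}.ncard ≤ N j) :
    Fintype.card M - ∑ j ∈ Ioc m' m, j * N j ≤ m' * #{x : M | compRep L x = x} := by
  have hlarge : #{x : M | ¬ (component L x).ncard ≤ m'} ≤ ∑ j ∈ Ioc m' m, j * N j :=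
    calc _ = ∑ j ∈ Ioc m' m,
          #{x ∈ {x : M | ¬ (component L x).ncard ≤ m'} | (component L x).ncard = j} :=
          card_eq_sum_card_fiberwise fun x hx =>
            mem_Ioc.2 ⟨not_le.1 (mem_filter.1 hx).2, hcomp x⟩
      _ ≤ ∑ j ∈ Ioc m' m, j * N j := sum_le_sum fun j hj =>
          (card_le_card (filter_subset_filter _ (filter_subset _ _))).trans
            ((card_filter_ncard_component_eq_le j).trans
              (Nat.mul_le_mul_left _ (hN j (mem_Ioc.1 hj).1)))
  have hsplit := card_filter_add_card_filter_not (s := univ)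
    (fun x : M => (component L x).ncard ≤ m')
  have hsmall := card_filter_ncard_component_le (L := L) (M := M) m'
  rw [card_univ] at hsplit
  omega

end ComponentCount

theorem card_filter_le_of_card_fixedPoints {α : Type*} [Fintype α] [DecidableEq α]
    [Nonempty α] (t : ℕ) :
    #{f : α → α | t ≤ #{x | f x = x}} ≤
      Fintype.card α ^ (Fintype.card α - t) * 2 ^ Fintype.card α := by
  set n := Fintype.card α
  have hsupp (f : α → α) : #{x | f x ≠ x} = n - #{x | f x = x} := by
    have := card_filter_add_card_filter_not (s := univ) (fun x => f x = x)
    simp only [card_univ, ← ne_eq] at this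
    omega
  have hfiber (D : Finset α) :
      #{f ∈ {f : α → α | t ≤ #{x | f x = x}} | ({x | f x ≠ x} : Finset α) = D} ≤
        n ^ (n - t) := by
    by_cases hD : #D ≤ n - t
    · calc _ ≤ #(univ : Finset (D → α)) := by
            refine card_le_card_of_injOn (fun f x => f x) (fun _ _ => mem_univ _) ?_
            intro f hf g hg hfg
            rw [mem_coe, mem_filter] at hf hg
            funext x
            by_cases hx : x ∈ D
            · exact congrFun hfg ⟨x, hx⟩
            · have hfx := hf.2 ▸ hx
              have hgx := hg.2 ▸ hx
              simp only [mem_filter, mem_univ, true_and, not_not] at hfx hgx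
              rw [hfx, hgx]
        _ ≤ n ^ (n - t) := by
            rw [card_univ, Fintype.card_fun, Fintype.card_coe]
            exact Nat.pow_le_pow_right Fintype.card_pos hD
    · refine (card_eq_zero.2 (filter_eq_empty_iff.2 fun f hf hfD => hD ?_)).le.trans
        (Nat.zero_le _)
      rw [← hfD, hsupp]
      exact Nat.sub_le_sub_left (mem_filter.1 hf).2 _
  calc _ ≤ n ^ (n - t) * #(univ : Finset (Finset α)) :=
        card_le_mul_card_image_of_maps_to (f := fun f : α → α => ({x | f x ≠ x} : Finset α))
          (fun _ _ => mem_univ _) _ fun D _ => hfiber D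
    _ = n ^ (n - t) * 2 ^ n := by rw [card_univ, Fintype.card_finset]

section Counting

variable {L : FirstOrder.Language} [L.IsRelational] {M : Type*}

theorem structure_eq_of_relMap_iff {r : ℕ} (harity : ∀ n, r < n → IsEmpty (L.Relations n))
    {S S' : L.Structure M}
    (h : ∀ (s : Fin (r + 1)) (R : L.Relations s) (v : Fin s → M),
      @RelMap L M S s R v ↔ @RelMap L M S' s R v) : S = S' := by
  refine Structure.ext (by funext _ F; exact isEmptyElim F) ?_
  funext s R v
  by_cases hs : s < r + 1
  · exact propext (h ⟨s, hs⟩ R v)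
  · exact ((harity s (by omega)).false R).elim

theorem finite_structure {r : ℕ} (harity : ∀ n, r < n → IsEmpty (L.Relations n))
    [∀ n, Finite (L.Relations n)] [Finite M] : Finite (L.Structure M) :=
  Finite.of_injective
    (fun S (s : Fin (r + 1)) (R : L.Relations s) (v : Fin s → M) => @RelMap L M S s R v)
    fun _ _ h => structure_eq_of_relMap_iff harity fun s R v =>
      Iff.of_eq (congrFun (congrFun (congrFun h s) R) v)

theorem ncard_setOf_relMap_mem_le [Fintype M] [∀ n, Finite (L.Relations n)] {r : ℕ}
    (harity : ∀ n, r < n → IsEmpty (L.Relations n)) (T : ∀ s, Finset (Fin s → M)) :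
    {S : L.Structure M | ∀ s (R : L.Relations s) v, @RelMap L M S s R v → v ∈ T s}.ncard ≤
      2 ^ ∑ s : Fin (r + 1), Nat.card (L.Relations s) * #(T s) := by
  let φ : {S : L.Structure M | ∀ s (R : L.Relations s) v, @RelMap L M S s R v → v ∈ T s} →
      ∀ s : Fin (r + 1), L.Relations s → T s → Prop :=
    fun S s R v => @RelMap L M S s R v
  have hφ : Function.Injective φ := by
    rintro ⟨S, hS⟩ ⟨S', hS'⟩ h
    have hR (s : Fin (r + 1)) (R : L.Relations s) (v : T s) :=
      Iff.of_eq (congrFun (congrFun (congrFun h s) R) v)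
    exact Subtype.ext (structure_eq_of_relMap_iff harity fun s R v =>
      ⟨fun hv => (hR s R ⟨v, hS _ R v hv⟩).1 hv,
        fun hv => (hR s R ⟨v, hS' _ R v hv⟩).2 hv⟩)
  rw [← Nat.card_coe_set_eq]
  refine (Nat.card_le_card_of_injective φ hφ).trans (le_of_eq ?_)
  rw [Nat.card_pi, ← prod_pow_eq_pow_sum]
  refine prod_congr rfl fun s _ => ?_
  rw [Nat.card_fun, Nat.card_fun, Nat.card_eq_fintype_card (α := Prop), Fintype.card_prop,
    Nat.card_eq_fintype_card (α := T s), Fintype.card_coe, ← pow_mul, mul_comm]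

end Counting

section FiberTuples

variable {M β : Type*} [Fintype M] [DecidableEq M] [Fintype β] [DecidableEq β]

def fiberTuples (ρ : M → β) (s : ℕ) : Finset (Fin s → M) :=
  univ.biUnion fun y => Fintype.piFinset fun _ => {z | ρ z = y}

theorem mem_fiberTuples {ρ : M → β} {s : ℕ} {v : Fin s → M} :
    v ∈ fiberTuples ρ s ↔ ∃ y, ∀ i, ρ (v i) = y := by
  simp [fiberTuples]

theorem card_fiberTuples_le {ρ : M → β} {m : ℕ} (hρ : ∀ y, #{z | ρ z = y} ≤ m)
    (s : ℕ) :
    #(fiberTuples ρ s) ≤ Fintype.card β * m ^ s :=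
  calc #(fiberTuples ρ s) ≤ ∑ y, #(Fintype.piFinset fun (_ : Fin s) => {z | ρ z = y}) :=
        card_biUnion_le (s := univ)
    _ ≤ ∑ _y : β, m ^ s := sum_le_sum fun y _ => by
        rw [Fintype.card_piFinset, prod_const, card_univ, Fintype.card_fin]
        exact Nat.pow_le_pow_left (hρ y) s
    _ = Fintype.card β * m ^ s := by rw [sum_const, card_univ, smul_eq_mul]

end FiberTuples


theorem ncard_le_of_card_fixedPoints_compRep {L : FirstOrder.Language} [L.IsRelational]
    [∀ n, Finite (L.Relations n)] {r : ℕ} (harity : ∀ n, r < n → IsEmpty (L.Relations n))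
    {M : Type*} [Fintype M] [LinearOrder M] [Nonempty M] {m t : ℕ} (X : Set (L.Structure M))
    (hcomp : ∀ S ∈ X, ∀ x, (@component L M S x).ncard ≤ m)
    (hfix : ∀ S ∈ X, t ≤ #{x | @compRep L M S _ _ x = x}) :
    X.ncard ≤
      2 ^ (Fintype.card M * ∑ s : Fin (r + 1), Nat.card (L.Relations s) * m ^ (s : ℕ)) *
        (Fintype.card M ^ (Fintype.card M - t) * 2 ^ Fintype.card M) := by
  have := finite_structure harity (L := L) (M := M)
  let rep : L.Structure M → M → M := fun S => @compRep L M S _ _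
  have hfiber (S : L.Structure M) (hS : S ∈ X) :
      (X ∩ rep ⁻¹' {rep S}).ncard ≤
        2 ^ (Fintype.card M * ∑ s : Fin (r + 1), Nat.card (L.Relations s) * m ^ (s : ℕ)) := by
    have hρ (y : M) : #{z | rep S z = y} ≤ m := by
      let _ := S
      rw [← Set.ncard_coe_finset, coe_filter_univ]
      exact (Set.ncard_le_ncard (fun z hz => mem_component_of_compRep_eq hz)
        (Set.toFinite _)).trans (hcomp S hS y)
    have hsupp : X ∩ rep ⁻¹' {rep S} ⊆ {S' : L.Structure M |
        ∀ s (R : L.Relations s) v, @RelMap L M S' s R v → v ∈ fiberTuples (rep S) s} := by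
      rintro S' ⟨-, hS'⟩ s R v hR
      rw [Set.mem_preimage, Set.mem_singleton_iff] at hS'
      let _ := S'
      rw [← hS', mem_fiberTuples]
      exact exists_compRep_eq_of_relMap hR
    refine ((Set.ncard_le_ncard hsupp (Set.toFinite _)).trans
      (ncard_setOf_relMap_mem_le harity _)).trans (Nat.pow_le_pow_right two_pos ?_)
    rw [mul_sum]
    refine sum_le_sum fun s _ => ?_
    calc Nat.card (L.Relations s) * #(fiberTuples (rep S) s)
        ≤ Nat.card (L.Relations s) * (Fintype.card M * m ^ (s : ℕ)) :=
          Nat.mul_le_mul_left _ (card_fiberTuples_le hρ s)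
      _ = Fintype.card M * (Nat.card (L.Relations s) * m ^ (s : ℕ)) := by ring
  calc X.ncard
      ≤ 2 ^ (Fintype.card M * ∑ s : Fin (r + 1), Nat.card (L.Relations s) * m ^ (s : ℕ)) *
          (rep '' X).ncard := Set.ncard_le_mul_ncard_image (Set.toFinite X) rep _ hfiber
    _ ≤ 2 ^ (Fintype.card M * ∑ s : Fin (r + 1), Nat.card (L.Relations s) * m ^ (s : ℕ)) *
          #{f : M → M | t ≤ #{x | f x = x}} := by
        rw [← Set.ncard_coe_finset, coe_filter_univ]
        gcongr
        · exact Set.toFinite _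
        · rintro _ ⟨S, hS, rfl⟩
          exact hfix S hS
    _ ≤ _ := by
        gcongr
        exact card_filter_le_of_card_fixedPoints t

theorem natCast_sub_le_of_lt_mul {n t E m' : ℕ} (hm' : 0 < m') (ht : n - E < m' * (t + 1))
    (htn : t ≤ n) : ((n - t : ℕ) : ℝ) ≤ n * (1 - 1 / m') + (E + 1 : ℕ) := by
  have hn : (n : ℝ) ≤ m' * (t + E + 1) := by
    have : n ≤ m' * (t + E + 1) :=
      calc n ≤ m' * (t + 1) + E := by omega
        _ ≤ m' * (t + 1) + m' * E := Nat.add_le_add_left (Nat.le_mul_of_pos_left E hm') _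
        _ = m' * (t + E + 1) := by ring
    exact_mod_cast this
  have hm'r : (0 : ℝ) < m' := by exact_mod_cast hm'
  have : (n : ℝ) / m' ≤ t + E + 1 := by rwa [div_le_iff₀ hm'r, mul_comm]
  push_cast [htn]
  linarith [show (n : ℝ) * (1 - 1 / m') = n - n / m' by ring]

theorem two_pow_mul_pow_le_rpow {n : ℕ} (hn : 2 ≤ n) (c d : ℕ) {a K : ℝ}
    (hd : (d : ℝ) ≤ n * a + K) :
    (2 : ℝ) ^ (n * c) * (n : ℝ) ^ d ≤
      (n : ℝ) ^ ((n : ℝ) * (a + c * Real.log 2 / Real.log n + K / n)) := by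
  have hn1 : (1 : ℝ) < n := by exact_mod_cast hn
  have hn0 : (0 : ℝ) < n := by linarith
  have hlog : 0 < Real.log n := Real.log_pos hn1
  calc (2 : ℝ) ^ (n * c) * (n : ℝ) ^ d
      = Real.exp (c * Real.log 2 * n) * (n : ℝ) ^ (d : ℝ) := by
        rw [Real.rpow_natCast, ← Real.rpow_natCast, Real.rpow_def_of_pos two_pos]
        push_cast
        ring_nf
    _ ≤ Real.exp (c * Real.log 2 * n) * (n : ℝ) ^ (n * a + K) := by
        gcongr
        exact hn1.le
    _ = (n : ℝ) ^ ((n : ℝ) * (a + c * Real.log 2 / Real.log n + K / n)) := by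
        rw [Real.rpow_def_of_pos hn0, Real.rpow_def_of_pos hn0, ← Real.exp_add]
        congr 1
        field_simp
        ring

end BoundedComponents

open BoundedComponents Finset in
theorem stmt12_general (L : FirstOrder.Language) [L.IsRelational]
    [∀ n, Finite (L.Relations n)] (r : ℕ)
    (harity : ∀ n, r < n → IsEmpty (L.Relations n))
    (H : ∀ n : ℕ, Set (L.Structure (Fin n)))
    (m m' : ℕ) (hm' : 2 ≤ m')
    (hcompbd : ∀ (n : ℕ) (S : L.Structure (Fin n)), S ∈ H n →
      ∀ A : Set (Fin n), @IsComponent L (Fin n) S A → A.ncard ≤ m)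
    (hmax : ∀ m'' : ℕ, m' < m'' → ∃ N : ℕ,
      ∀ (n : ℕ) (S : L.Structure (Fin n)), S ∈ H n →
        {A : Set (Fin n) | @IsComponent L (Fin n) S A ∧ A.ncard = m''}.ncard < N) :
    ∃ g : ℕ → ℝ, Tendsto g atTop (nhds 0) ∧
      ∀ᶠ n : ℕ in atTop,
        ((H n).ncard : ℝ) ≤ (n : ℝ) ^ ((n : ℝ) * (1 - 1 / (m' : ℝ) + g n)) := by
  choose! N hN using hmax
  set E := ∑ j ∈ Ioc m' m, j * N j
  set C := ∑ s : Fin (r + 1), Nat.card (L.Relations s) * m ^ (s : ℕ)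
  have hcomp (n : ℕ) (S : L.Structure (Fin n)) (hS : S ∈ H n) (x : Fin n) :
      (@component L _ S x).ncard ≤ m :=
    hcompbd n S hS _ (@isComponent_component L _ S x)
  refine ⟨fun n => (C + 1 : ℕ) * Real.log 2 / Real.log n + (E + 1 : ℕ) / n, ?_, ?_⟩
  · simpa using ((tendsto_const_nhds.div_atTop
      (Real.tendsto_log_atTop.comp tendsto_natCast_atTop_atTop)).add
      (tendsto_const_div_atTop_nhds_zero_nat ((E + 1 : ℕ) : ℝ)))
  filter_upwards [eventually_ge_atTop 2] with n hn
  have : Nonempty (Fin n) := ⟨⟨0, by omega⟩⟩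
  have hfix (S : L.Structure (Fin n)) (hS : S ∈ H n) :
      (n - E) / m' ≤ #{x | @compRep L _ S _ _ x = x} := by
    refine Nat.div_le_of_le_mul ?_
    simpa using @card_sub_le_mul_card_fixedPoints_compRep L _ S _ _ m m' N (hcomp n S hS)
      fun j hj => (hN j hj n S hS).le
  have hcount := ncard_le_of_card_fixedPoints_compRep harity (H n) (hcomp n) hfix
  rw [Fintype.card_fin] at hcount
  calc ((H n).ncard : ℝ) ≤ (2 : ℝ) ^ (n * (C + 1)) * (n : ℝ) ^ (n - (n - E) / m') := by
        exact_mod_cast hcount.trans_eq (by ring)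
    _ ≤ _ := (two_pow_mul_pow_le_rpow hn _ _ (natCast_sub_le_of_lt_mul (by omega)
        (Nat.lt_mul_div_succ _ (by omega)) ((Nat.div_le_self _ _).trans (Nat.sub_le _ _)))).trans_eq
          (by ring_nf)

/-- let `H` be a hereditary class of finite structures over a finite
relational language of arity `r` in which every structure is totally `k`-bounded, every
component has size at most `m`, and `m' ≥ 2` is maximal with `H` containing structures
with arbitrarily many components of size `m'`.  Then `|H_n| ≤ n^{n(1-1/m'+o(1))}`. -/
theorem stmt12 (L : FirstOrder.Language) [L.IsRelational]
    [∀ n, Finite (L.Relations n)] (r : ℕ)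
    (harity : ∀ n, r < n → IsEmpty (L.Relations n))
    (H : ∀ n : ℕ, Set (L.Structure (Fin n)))
    (hered : ∀ (n : ℕ) (S : L.Structure (Fin n)), S ∈ H n →
      ∀ (j : ℕ) (f : Fin j → Fin n), Function.Injective f →
        (@pullbackStruct L _ (Fin n) (Fin j) S f) ∈ H j)
    (k : ℕ) (hbdd : ∀ (n : ℕ) (S : L.Structure (Fin n)), S ∈ H n →
      @TotallyBddStruct L (Fin n) S k)
    (m m' : ℕ) (hm'le : m' ≤ m) (hm' : 2 ≤ m')
    (hcompbd : ∀ (n : ℕ) (S : L.Structure (Fin n)), S ∈ H n →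
      ∀ A : Set (Fin n), @IsComponent L (Fin n) S A → A.ncard ≤ m)
    (harb : ∀ N : ℕ, ∃ (n : ℕ) (S : L.Structure (Fin n)), S ∈ H n ∧
      N ≤ {A : Set (Fin n) | @IsComponent L (Fin n) S A ∧ A.ncard = m'}.ncard)
    (hmax : ∀ m'' : ℕ, m' < m'' → ∃ N : ℕ,
      ∀ (n : ℕ) (S : L.Structure (Fin n)), S ∈ H n →
        {A : Set (Fin n) | @IsComponent L (Fin n) S A ∧ A.ncard = m''}.ncard < N) :
    ∃ g : ℕ → ℝ, Tendsto g atTop (nhds 0) ∧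
      ∀ᶠ n : ℕ in atTop,
        ((H n).ncard : ℝ) ≤ (n : ℝ) ^ ((n : ℝ) * (1 - 1 / (m' : ℝ) + g n)) :=
  stmt12_general L r harity H m m' hm' hcompbd hmax
end

section
/- Suppose M is a totally k-bounded L-structure over a finite relational language of maximum arity r ≥ 2, and M contains an infinite component. Then for every integer t ≥ 1 there exists t' with t ≤ t' ≤ tr and an induced substructure M' ⊆ M such that M' contains infinitely many distinct components of size t'. -/
open FirstOrder FirstOrder.Language

/-!
Inside the infinite connected set `A` pick finite connected pieces `B₀, B₁, …` with sizes in
`[t, t + r)`, each inside `A` minus the earlier pieces and their neighbourhoods `N(Bᵢ)`. Total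
`k`-boundedness makes `N(G)` finite for finite `G`, and removing a finite set from an infinite
connected set leaves an infinite connected part; inside it a single point grows, one relation
tuple (at most `r` new points) at a time, until its size reaches `t`. By pigeonhole infinitely
many pieces share a size `t' < t + r ≤ t r + 1`. No relation tuple meets two pieces, so in the
substructure induced on their union the pieces are exactly the components.
-/

namespace FirstOrder.Language

variable {L : Language} {M : Type*} [L.Structure M]

section Paths

theorem StepIn.symm {A : Set M} {x y : M} (h : StepIn L A x y) : StepIn L A y x := by
  obtain ⟨hx, hy, n, R, v, hR, hv, hxv, hyv⟩ := h
  exact ⟨hy, hx, n, R, v, hR, hv, hyv, hxv⟩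

theorem StepIn.mono {A B : Set M} (hAB : A ⊆ B) {x y : M} (h : StepIn L A x y) :
    StepIn L B x y := by
  obtain ⟨hx, hy, n, R, v, hR, hv, hxv, hyv⟩ := h
  exact ⟨hAB hx, hAB hy, n, R, v, hR, fun i => hAB (hv i), hxv, hyv⟩

theorem reflTransGen_stepIn_symm {A : Set M} {x y : M}
    (h : Relation.ReflTransGen (StepIn L A) x y) : Relation.ReflTransGen (StepIn L A) y x :=
  have : Std.Symm (StepIn L A) := ⟨fun _ _ => StepIn.symm⟩
  Relation.ReflTransGen.stdSymm.symm _ _ h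

theorem isConnectedSet_singleton (a : M) : IsConnectedSet L {a} := by
  rintro x rfl y rfl
  exact .refl

theorem IsConnectedSet.union_range {B : Set M} (hB : IsConnectedSet L B) {n : ℕ}
    {R : L.Relations n} {v : Fin n → M} (hR : Structure.RelMap R v) (hvB : ∃ i, v i ∈ B) :
    IsConnectedSet L (B ∪ Set.range v) := by
  obtain ⟨i₀, hi₀⟩ := hvB
  have hstep : ∀ x ∈ Set.range v, ∀ y ∈ Set.range v, StepIn L (B ∪ Set.range v) x y :=
    fun x hx y hy => ⟨.inr hx, .inr hy, n, R, v, hR, fun i => .inr ⟨i, rfl⟩, hx, hy⟩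
  have hpath : ∀ a ∈ B, ∀ b ∈ B, Relation.ReflTransGen (StepIn L (B ∪ Set.range v)) a b :=
    fun a ha b hb => Relation.ReflTransGen.mono (fun _ _ => StepIn.mono Set.subset_union_left)
      _ _ (hB a ha b hb)
  rintro a (ha | ha) b (hb | hb)
  · exact hpath a ha b hb
  · exact (hpath a ha _ hi₀).tail (hstep _ ⟨i₀, rfl⟩ _ hb)
  · exact .head (hstep _ ha _ ⟨i₀, rfl⟩) (hpath _ hi₀ b hb)
  · exact .single (hstep _ ha _ hb)

theorem IsConnectedSet.exists_relMap_straddling {B C : Set M} (hC : IsConnectedSet L C)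
    (hBC : B ⊆ C) {b c : M} (hb : b ∈ B) (hc : c ∈ C) (hcB : c ∉ B) :
    ∃ (n : ℕ) (R : L.Relations n) (v : Fin n → M), Structure.RelMap R v ∧
      (∀ i, v i ∈ C) ∧ (∃ i, v i ∈ B) ∧ ∃ i, v i ∉ B := by
  by_contra! h
  suffices ∀ y, Relation.ReflTransGen (StepIn L C) b y → y ∈ B from
    hcB (this c (hC b (hBC hb) c hc))
  intro y hy
  induction hy with
  | refl => exact hb
  | tail _ hs ih =>
    obtain ⟨-, -, n, R, v, hR, hvC, ⟨i, rfl⟩, ⟨j, rfl⟩⟩ := hs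
    exact h n R v hR hvC ⟨i, ih⟩ j

end Paths

section Neighbourhood

variable (L) in
/-- The paper's neighbourhood `N(B)`. -/
def nbhd (B : Set M) : Set M :=
  {y | ∃ (n : ℕ) (R : L.Relations n) (v : Fin n → M),
    Structure.RelMap R v ∧ (∃ i, v i ∈ B) ∧ y ∈ Set.range v}

theorem mem_nbhd_of_relMap {B : Set M} {n : ℕ} {R : L.Relations n} {v : Fin n → M}
    (hR : Structure.RelMap R v) {i : Fin n} (hi : v i ∈ B) (j : Fin n) : v j ∈ nbhd L B :=
  ⟨n, R, v, hR, ⟨i, hi⟩, j, rfl⟩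

theorem disjoint_nbhd_comm {B C : Set M} (h : Disjoint B (nbhd L C)) :
    Disjoint C (nbhd L B) := by
  rw [Set.disjoint_left]
  rintro _ hC ⟨n, R, v, hR, ⟨i, hi⟩, j, rfl⟩
  exact Set.disjoint_left.1 h hi (mem_nbhd_of_relMap hR hC i)

theorem TotallyBddStruct.finite_relMap_apply_eq {k : ℕ}
    (hbdd : TotallyBddStruct L M k) {n : ℕ} (R : L.Relations n) (i : Fin n) (a : M) :
    {w : Fin n → M | Structure.RelMap R w ∧ w i = a}.Finite := by
  by_cases hi : ({i} : Finset (Fin n)) = Finset.univ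
  · refine (Set.finite_singleton fun _ => a).subset ?_
    rintro w ⟨-, rfl⟩
    funext j
    have hj : j ∈ ({i} : Finset (Fin n)) := hi ▸ Finset.mem_univ j
    rw [Finset.mem_singleton.1 hj]
  · refine ((hbdd n R {i} (Finset.singleton_nonempty i) hi fun _ => a).1).subset ?_
    rintro w ⟨hR, rfl⟩
    exact ⟨hR, by simp⟩

theorem TotallyBddStruct.nbhd_finite [∀ n, Finite (L.Relations n)] {k r : ℕ}
    (hbdd : TotallyBddStruct L M k) (harity : ∀ n, r < n → IsEmpty (L.Relations n))
    {B : Set M} (hB : B.Finite) : (nbhd L B).Finite := by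
  have hsub : nbhd L B ⊆ ⋃ a ∈ B, ⋃ (n : Fin (r + 1)) (R : L.Relations n) (i : Fin n),
      ⋃ w ∈ {w : Fin n → M | Structure.RelMap R w ∧ w i = a}, Set.range w := by
    rintro y ⟨n, R, v, hR, ⟨i, hi⟩, hy⟩
    have hn : n < r + 1 := Nat.lt_succ_of_le (Nat.le_of_not_gt fun h => (harity n h).false R)
    simp only [Set.mem_iUnion]
    exact ⟨v i, hi, ⟨n, hn⟩, R, i, v, ⟨hR, rfl⟩, hy⟩
  exact (hB.biUnion fun a _ => Set.finite_iUnion fun n => Set.finite_iUnion fun R =>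
    Set.finite_iUnion fun i => (hbdd.finite_relMap_apply_eq R i a).biUnion fun w _ =>
      Set.finite_range w).subset hsub

end Neighbourhood

section Growing

variable {r : ℕ} (harity : ∀ n, r < n → IsEmpty (L.Relations n))
include harity

theorem IsConnectedSet.exists_ssuperset {B C : Set M} (hC : IsConnectedSet L C)
    (hCinf : C.Infinite) (hBC : B ⊆ C) (hB : B.Finite) (hBne : B.Nonempty)
    (hBconn : IsConnectedSet L B) :
    ∃ B', B ⊂ B' ∧ B' ⊆ C ∧ B'.Finite ∧ IsConnectedSet L B' ∧
      B'.ncard ≤ B.ncard + r := by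
  obtain ⟨b, hb⟩ := hBne
  obtain ⟨c, hc, hcB⟩ := (hCinf.sdiff hB).nonempty
  obtain ⟨n, R, v, hR, hvC, hvB, j, hj⟩ := hC.exists_relMap_straddling hBC hb hc hcB
  have hn : n ≤ r := Nat.le_of_not_gt fun h => (harity n h).false R
  have hv : (Set.range v).ncard ≤ n := by
    simpa [Set.image_univ] using Set.ncard_image_le (f := v) (s := Set.univ)
  refine ⟨B ∪ Set.range v, Set.ssubset_iff_subset_ne.2 ⟨Set.subset_union_left, ?_⟩,
    Set.union_subset hBC (Set.range_subset_iff.2 hvC), hB.union (Set.finite_range v),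
    hBconn.union_range hR hvB, (Set.ncard_union_le _ _).trans (by omega)⟩
  exact fun h => hj (h ▸ Set.mem_union_right B ⟨j, rfl⟩)

theorem IsConnectedSet.exists_subset_ncard_mem_Ico {C : Set M} (hC : IsConnectedSet L C)
    (hCinf : C.Infinite) {t : ℕ} (ht : 1 ≤ t) :
    ∃ B ⊆ C, B.Finite ∧ IsConnectedSet L B ∧ t ≤ B.ncard ∧ B.ncard < t + r := by
  induction t, ht using Nat.le_induction with
  | base =>
    obtain ⟨a, ha⟩ := hCinf.nonempty
    obtain ⟨B', hsub, -, hB'fin, -, hB'⟩ := hC.exists_ssuperset harity hCinf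
      (Set.singleton_subset_iff.2 ha) (Set.finite_singleton a) (Set.singleton_nonempty a)
      (isConnectedSet_singleton a)
    have := Set.ncard_lt_ncard hsub hB'fin
    rw [Set.ncard_singleton] at this hB'
    exact ⟨{a}, Set.singleton_subset_iff.2 ha, Set.finite_singleton a,
      isConnectedSet_singleton a, by simp, by simp; omega⟩
  | succ t ht ih =>
    obtain ⟨B, hBC, hB, hBconn, htB, hBt⟩ := ih
    by_cases hlt : t + 1 ≤ B.ncard
    · exact ⟨B, hBC, hB, hBconn, hlt, by omega⟩
    have hBne : B.Nonempty := Set.nonempty_of_ncard_ne_zero (by omega)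
    obtain ⟨B', hsub, hB'C, hB', hB'conn, hB'le⟩ :=
      hC.exists_ssuperset harity hCinf hBC hB hBne hBconn
    have := Set.ncard_lt_ncard hsub hB'
    exact ⟨B', hB'C, hB', hB'conn, by omega, by omega⟩

end Growing

section Splitting

variable (L) in
def reachSet (S : Set M) (x : M) : Set M :=
  {y | Relation.ReflTransGen (StepIn L S) x y}

theorem reachSet_subset {S : Set M} {x : M} (hx : x ∈ S) : reachSet L S x ⊆ S := by
  intro y hy
  induction hy with
  | refl => exact hx
  | tail _ hs _ => exact hs.2.1

theorem isConnectedSet_reachSet (S : Set M) (x : M) : IsConnectedSet L (reachSet L S x) := by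
  have hfrom : ∀ y ∈ reachSet L S x,
      Relation.ReflTransGen (StepIn L (reachSet L S x)) x y := by
    intro y hy
    induction hy with
    | refl => exact .refl
    | @tail p q hp hs ih =>
      obtain ⟨-, -, n, R, v, hR, hvS, ⟨i, rfl⟩, hq⟩ := hs
      have hv : ∀ j, v j ∈ reachSet L S x := fun j =>
        hp.tail ⟨hvS i, hvS j, n, R, v, hR, hvS, ⟨i, rfl⟩, ⟨j, rfl⟩⟩
      exact ih.tail ⟨hv i, Set.range_subset_iff.2 hv hq, n, R, v, hR, hv, ⟨i, rfl⟩, hq⟩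
  exact fun a ha b hb => (reflTransGen_stepIn_symm (hfrom a ha)).trans (hfrom b hb)

theorem reachSet_subset_reachSet_diff {A G : Set M} {x : M}
    (hdisj : Disjoint (reachSet L (A \ G) x) (nbhd L G)) :
    reachSet L A x ⊆ reachSet L (A \ G) x := by
  intro y hy
  induction hy with
  | refl => exact .refl
  | @tail p q _ hs ih =>
    obtain ⟨-, -, n, R, v, hR, hvA, ⟨i, rfl⟩, hq⟩ := hs
    have hvG : ∀ j, v j ∉ G := fun j hj =>
      Set.disjoint_left.1 hdisj ih (mem_nbhd_of_relMap hR hj i)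
    have hv : ∀ j, v j ∈ A \ G := fun j => ⟨hvA j, hvG j⟩
    exact ih.tail ⟨hv i, Set.range_subset_iff.2 hv hq, n, R, v, hR, hv, ⟨i, rfl⟩, hq⟩

/-- If every part of `A \ G` reachable inside `A \ G` were finite, a point outside the parts
reachable from the finitely many points of `nbhd L G` would reach all of `A \ G`. -/
theorem IsConnectedSet.exists_infinite_subset_diff {A G : Set M} (hA : IsConnectedSet L A)
    (hAinf : A.Infinite) (hG : G.Finite) (hNG : (nbhd L G).Finite) :
    ∃ C ⊆ A \ G, C.Infinite ∧ IsConnectedSet L C := by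
  set S := A \ G
  have hSinf : S.Infinite := hAinf.sdiff hG
  by_contra! hfin
  have hfin' : ∀ x ∈ S, (reachSet L S x).Finite := fun x hx =>
    Set.not_infinite.1 fun h => hfin _ (reachSet_subset hx) h (isConnectedSet_reachSet S x)
  set D := ⋃ p ∈ nbhd L G ∩ S, reachSet L S p
  have hD : D.Finite := (hNG.inter_of_left S).biUnion fun p hp => hfin' p hp.2
  obtain ⟨x, hxS, hxD⟩ := (hSinf.sdiff hD).nonempty
  have hdisj : Disjoint (reachSet L S x) (nbhd L G) := by
    refine Set.disjoint_left.2 fun q hq hqG => hxD ?_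
    exact Set.mem_biUnion ⟨hqG, reachSet_subset hxS hq⟩ (reflTransGen_stepIn_symm hq)
  have hSx : S ⊆ reachSet L S x := fun y hy =>
    reachSet_subset_reachSet_diff hdisj (hA x hxS.1 y hy.1)
  exact hSinf ((hfin' x hxS).subset hSx)

end Splitting

section Separated

theorem _root_.Set.exists_seq_disjoint {α : Type*} {P : Set α → Prop} {F : Set α → Set α}
    (hF : ∀ B, P B → (F B).Finite)
    (hP : ∀ G : Set α, G.Finite → ∃ B, P B ∧ Disjoint B G) :
    ∃ f : ℕ → Set α, (∀ n, P (f n)) ∧ ∀ i j, i < j → Disjoint (f j) (F (f i)) := by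
  have hP' : ∀ G : Set α, ∃ B, G.Finite → P B ∧ Disjoint B G := fun G => by
    by_cases hG : G.Finite
    · obtain ⟨B, hB⟩ := hP G hG
      exact ⟨B, fun _ => hB⟩
    · exact ⟨∅, fun h => absurd h hG⟩
  choose g hg using hP'
  -- `G n` collects `F` of the first `n` pieces; the next piece is chosen off it.
  let G : ℕ → Set α := fun n => Nat.rec ∅ (fun _ Gn => Gn ∪ F (g Gn)) n
  have hG : ∀ n, (G n).Finite ∧ P (g (G n)) := by
    intro n
    induction n with
    | zero => exact ⟨Set.finite_empty, (hg _ Set.finite_empty).1⟩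
    | succ n ih =>
      have hfin : (G (n + 1)).Finite := ih.1.union (hF _ ih.2)
      exact ⟨hfin, (hg _ hfin).1⟩
  have hmono : Monotone G := monotone_nat_of_le_succ fun n => Set.subset_union_left
  refine ⟨fun n => g (G n), fun n => (hG n).2, fun i j hij => ?_⟩
  have hsub : F (g (G i)) ⊆ G j := Set.subset_union_right.trans (hmono hij)
  exact ((hg _ (hG j).1).2).mono_right hsub

variable {r k : ℕ} [∀ n, Finite (L.Relations n)]

theorem IsConnectedSet.exists_seq_pairwise_separated (hbdd : TotallyBddStruct L M k)
    (harity : ∀ n, r < n → IsEmpty (L.Relations n)) {A : Set M} (hA : IsConnectedSet L A)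
    (hAinf : A.Infinite) {t : ℕ} (ht : 1 ≤ t) :
    ∃ f : ℕ → Set M,
      (∀ n, IsConnectedSet L (f n) ∧ t ≤ (f n).ncard ∧ (f n).ncard < t + r) ∧
      Pairwise fun i j => Disjoint (f i) (f j ∪ nbhd L (f j)) := by
  have hpiece : ∀ G : Set M, G.Finite → ∃ B,
      (B.Finite ∧ IsConnectedSet L B ∧ t ≤ B.ncard ∧ B.ncard < t + r) ∧ Disjoint B G := by
    intro G hG
    obtain ⟨C, hCA, hCinf, hC⟩ :=
      hA.exists_infinite_subset_diff hAinf hG (hbdd.nbhd_finite harity hG)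
    obtain ⟨B, hBC, hB⟩ := hC.exists_subset_ncard_mem_Ico harity hCinf ht
    exact ⟨B, hB, Set.disjoint_of_subset_left (hBC.trans hCA) Set.disjoint_sdiff_left⟩
  obtain ⟨f, hf, hsep⟩ := Set.exists_seq_disjoint (F := fun B => B ∪ nbhd L B)
    (fun B hB => hB.1.union (hbdd.nbhd_finite harity hB.1)) hpiece
  refine ⟨f, fun n => (hf n).2, fun i j hij => ?_⟩
  rcases lt_or_gt_of_ne hij with h | h
  · obtain ⟨hji, hjN⟩ := Set.disjoint_union_right.1 (hsep i j h)
    exact Set.disjoint_union_right.2 ⟨hji.symm, disjoint_nbhd_comm hjN⟩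
  · exact hsep j i h

end Separated

section Induced

theorem IsConnectedSet.subset_of_pairwise_disjoint_nbhd {ι : Type*} {f : ι → Set M}
    (hsep : Pairwise fun i j => Disjoint (f i) (nbhd L (f j))) {C : Set M}
    (hC : IsConnectedSet L C) (hCf : C ⊆ ⋃ j, f j) {a : M} (ha : a ∈ C) {i : ι}
    (hai : a ∈ f i) : C ⊆ f i := by
  suffices ∀ y, Relation.ReflTransGen (StepIn L C) a y → y ∈ f i from
    fun c hc => this c (hC a ha c hc)
  intro y hy
  induction hy with
  | refl => exact hai
  | tail _ hs ih =>
    obtain ⟨-, hqC, n, R, v, hR, -, ⟨l, rfl⟩, ⟨m, rfl⟩⟩ := hs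
    obtain ⟨j, hj⟩ := Set.mem_iUnion.1 (hCf hqC)
    by_contra hne
    have hij : i ≠ j := fun h => hne (h ▸ hj)
    exact Set.disjoint_left.1 (hsep hij) ih (mem_nbhd_of_relMap hR hj l)

variable [L.IsRelational]

theorem IsConnectedSet.preimage_val {X B : Set M} (hB : IsConnectedSet L B) (hBX : B ⊆ X) :
    @IsConnectedSet L X (pullbackStruct L Subtype.val) (Subtype.val ⁻¹' B) := by
  let _ : L.Structure X := pullbackStruct L Subtype.val
  have hstep : ∀ p q : X, StepIn L B p q → StepIn L (Subtype.val ⁻¹' B) p q := by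
    rintro p q ⟨hp, hq, n, R, v, hR, hvB, ⟨i, hi⟩, ⟨j, hj⟩⟩
    exact ⟨hp, hq, n, R, fun l => ⟨v l, hBX (hvB l)⟩, hR, hvB, ⟨i, Subtype.ext hi⟩,
      ⟨j, Subtype.ext hj⟩⟩
  intro a ha b hb
  suffices ∀ y, Relation.ReflTransGen (StepIn L B) a y → ∀ hy : y ∈ X,
      Relation.ReflTransGen (StepIn L (Subtype.val ⁻¹' B)) a ⟨y, hy⟩ from
    this b (hB a ha b hb) b.2
  intro y hy
  induction hy with
  | refl => exact fun _ => .refl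
  | @tail p q _ hs ih => exact fun hq => (ih (hBX hs.1)).tail (hstep ⟨p, _⟩ ⟨q, hq⟩ hs)

theorem IsConnectedSet.image_val {X : Set M} {D : Set X}
    (hD : @IsConnectedSet L X (pullbackStruct L Subtype.val) D) :
    IsConnectedSet L (Subtype.val '' D) := by
  let _ : L.Structure X := pullbackStruct L Subtype.val
  rintro _ ⟨a, ha, rfl⟩ _ ⟨b, hb, rfl⟩
  refine Relation.ReflTransGen.lift Subtype.val (fun p q hs => ?_) a b (hD a ha b hb)
  obtain ⟨hp, hq, n, R, v, hR, hvD, ⟨i, rfl⟩, ⟨j, rfl⟩⟩ := hs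
  exact ⟨Set.mem_image_of_mem _ hp, Set.mem_image_of_mem _ hq, n, R, Subtype.val ∘ v, hR,
    fun l => Set.mem_image_of_mem _ (hvD l), ⟨i, rfl⟩, ⟨j, rfl⟩⟩

theorem isComponent_preimage_val {ι : Type*} {f : ι → Set M}
    (hconn : ∀ i, IsConnectedSet L (f i))
    (hsep : Pairwise fun i j => Disjoint (f i) (nbhd L (f j))) {i : ι} (hne : (f i).Nonempty) :
    @IsComponent L (⋃ j, f j) (pullbackStruct L Subtype.val) (Subtype.val ⁻¹' f i) := by
  refine ⟨(hconn i).preimage_val (Set.subset_iUnion f i), fun D hD hDconn => ?_⟩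
  obtain ⟨a, ha⟩ := hne
  have haD : (⟨a, Set.mem_iUnion_of_mem i ha⟩ : ↥(⋃ j, f j)) ∈ D := hD ha
  have hDi : Subtype.val '' D ⊆ f i := hDconn.image_val.subset_of_pairwise_disjoint_nbhd hsep
    (Subtype.coe_image_subset _ D) ⟨_, haD, rfl⟩ ha
  exact Set.Subset.antisymm (fun x hx => hDi ⟨x, hx, rfl⟩) hD

theorem infinite_setOf_isComponent_ncard_eq {ι : Type*} [Infinite ι] {f : ι → Set M}
    (hconn : ∀ i, IsConnectedSet L (f i))
    (hsep : Pairwise fun i j => Disjoint (f i) (f j ∪ nbhd L (f j)))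
    {t : ℕ} (hcard : ∀ i, (f i).ncard = t) (ht : t ≠ 0) :
    {A : Set (⋃ i, f i) |
      @IsComponent L _ (pullbackStruct L Subtype.val) A ∧ A.ncard = t}.Infinite := by
  have hne : ∀ i, (f i).Nonempty := fun i => Set.nonempty_of_ncard_ne_zero (hcard i ▸ ht)
  have hsep' : Pairwise fun i j => Disjoint (f i) (nbhd L (f j)) :=
    fun i j h => (Set.disjoint_union_right.1 (hsep h)).2
  refine Set.infinite_of_injective_forall_mem (f := fun i => Subtype.val ⁻¹' f i)
    (fun i j hij => ?_) fun i => ⟨isComponent_preimage_val hconn hsep' (hne i), ?_⟩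
  · by_contra h
    obtain ⟨a, ha⟩ := hne i
    have haj : (⟨a, Set.mem_iUnion_of_mem i ha⟩ : ↥(⋃ j, f j)) ∈
        Subtype.val ⁻¹' f j := by
      simp only at hij
      rw [← hij]
      exact ha
    exact Set.disjoint_left.1 (hsep h) ha (Or.inl haj)
  · rw [Set.ncard_preimage_of_injective_subset_range Subtype.val_injective
      (Subtype.range_coe.symm ▸ Set.subset_iUnion f i)]
    exact hcard i

end Induced

end FirstOrder.Language

theorem stmt15_general (L : FirstOrder.Language) [L.IsRelational]
    [∀ n, Finite (L.Relations n)] (r k : ℕ)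
    (harity : ∀ n, r < n → IsEmpty (L.Relations n))
    (M : Type*) [L.Structure M] (hbdd : TotallyBddStruct L M k)
    (hinf : ∃ A : Set M, IsComponent L A ∧ A.Infinite) :
    ∀ t : ℕ, 1 ≤ t → ∃ t', t ≤ t' ∧ t' ≤ t * r ∧
      ∃ X : Set M,
        {A : Set X |
          @IsComponent L X (pullbackStruct L (Subtype.val : X → M)) A ∧
            A.ncard = t'}.Infinite := by
  intro t ht
  obtain ⟨A, ⟨hA, -⟩, hAinf⟩ := hinf
  obtain ⟨f, hf, hsep⟩ := hA.exists_seq_pairwise_separated hbdd harity hAinf ht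
  let size : ℕ → Set.Ico t (t + r) := fun n => ⟨(f n).ncard, (hf n).2⟩
  obtain ⟨t', hS⟩ := Finite.exists_infinite_fiber size
  obtain ⟨htt', ht'r⟩ := t'.2
  have hr : 1 ≤ r := by omega
  refine ⟨t', htt', by nlinarith, ⋃ n : size ⁻¹' {t'}, f n, ?_⟩
  exact infinite_setOf_isComponent_ncard_eq (f := fun n : size ⁻¹' {t'} => f n)
    (fun n => (hf n).1) (hsep.comp_of_injective Subtype.val_injective)
    (fun n => congrArg Subtype.val n.2) (by omega)

/-- if a totally `k`-bounded structure over a finite relational language of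
maximum arity `r ≥ 2` has an infinite component, then for every `t ≥ 1` there are
`t ≤ t' ≤ tr` and an induced substructure (on a subset `X`) with infinitely many distinct
components of size `t'`. -/
theorem stmt15 (L : FirstOrder.Language) [L.IsRelational]
    [∀ n, Finite (L.Relations n)] (r k : ℕ) (hr : 2 ≤ r)
    (harity : ∀ n, r < n → IsEmpty (L.Relations n))
    (M : Type*) [L.Structure M] (hbdd : TotallyBddStruct L M k)
    (hinf : ∃ A : Set M, IsComponent L A ∧ A.Infinite) :
    ∀ t : ℕ, 1 ≤ t → ∃ t', t ≤ t' ∧ t' ≤ t * r ∧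
      ∃ X : Set M,
        {A : Set X |
          @IsComponent L X (pullbackStruct L (Subtype.val : X → M)) A ∧
            A.ncard = t'}.Infinite :=
  stmt15_general L r k harity M hbdd hinf
end
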